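/- arXiv:1310.1277 — 9 statements merged into one kernel-verified Lean document; each statement's English description precedes it below -/
import Mathlib

section
/- Let a, b be integers with a ≥ b ≥ 1 such that a² + 4b is not a perfect square, and let β = (a + √(a² + 4b))/2 be the positive root of x² = ax + b. Then γ(β) ≥ max{0, 1 − (b−1)·b·β/(β² − b²)}. -/
noncomputable section

/-- The β-transformation `T : [0,1) → [0,1)`, `T(x) = βx − ⌊βx⌋`. -/
def betaT (β : ℝ) (x : ℝ) : ℝ := Int.fract (β * x)

/-- Numbers in `[0,1)` with purely periodic β-expansion. -/
def Pur (β : ℝ) : Set ℝ :=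
  {x | x ∈ Set.Ico (0 : ℝ) 1 ∧ ∃ k : ℕ, 1 ≤ k ∧ (betaT β)^[k] x = x}

/-- The rationals `p/q` (in lowest terms) with `gcd(q, b) = 1`, viewed inside `ℝ`.
For `β` quadratic with `β² = aβ + b` one has `|N(β)| = b`, so this is `Z_{N(β)}`. -/
def ZNb (b : ℤ) : Set ℝ :=
  {x | ∃ q : ℚ, (q : ℝ) = x ∧ Int.gcd (q.den : ℤ) b = 1}

/-- `γ(β) = sup { r ∈ [0,1] : Z_{N(β)} ∩ [0,r) ⊆ Pur(β) }`. -/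
def gammaFn (β : ℝ) (b : ℤ) : ℝ :=
  sSup {r : ℝ | r ∈ Set.Icc (0 : ℝ) 1 ∧ ZNb b ∩ Set.Ico 0 r ⊆ Pur β}

namespace GammaAux

def xv (q : ℤ) (β : ℝ) (s : ℤ × ℤ) : ℝ := ((s.1 : ℝ) + (s.2 : ℝ) * β) / (q : ℝ)

def yv (a q : ℤ) (β : ℝ) (s : ℤ × ℤ) : ℝ := ((s.1 : ℝ) + (s.2 : ℝ) * ((a : ℝ) - β)) / (q : ℝ)

noncomputable def orb (a b q : ℤ) (β : ℝ) (p : ℤ) : ℕ → ℤ × ℤ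
  | 0 => (p, 0)
  | k + 1 =>
    (b * (orb a b q β p k).2 - ⌊β * xv q β (orb a b q β p k)⌋ * q,
     (orb a b q β p k).1 + a * (orb a b q β p k).2)

noncomputable def dg (a b q : ℤ) (β : ℝ) (p : ℤ) (k : ℕ) : ℤ :=
  ⌊β * xv q β (orb a b q β p k)⌋

section rec
variable (a b q : ℤ) (β : ℝ) (p : ℤ)

lemma orb_fst (k : ℕ) :
    (orb a b q β p (k+1)).1 = b * (orb a b q β p k).2 - dg a b q β p k * q := rfl

lemma orb_snd (k : ℕ) :
    (orb a b q β p (k+1)).2 = (orb a b q β p k).1 + a * (orb a b q β p k).2 := rfl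

lemma qX (hq : (q:ℝ) ≠ 0) (k : ℕ) :
    (q:ℝ) * xv q β (orb a b q β p k)
      = ((orb a b q β p k).1 : ℝ) + ((orb a b q β p k).2 : ℝ) * β := by
  rw [xv]; field_simp

lemma qY (hq : (q:ℝ) ≠ 0) (k : ℕ) :
    (q:ℝ) * yv a q β (orb a b q β p k)
      = ((orb a b q β p k).1 : ℝ) + ((orb a b q β p k).2 : ℝ) * ((a:ℝ) - β) := by
  rw [yv]; field_simp

lemma Xrec (hq : (q:ℝ) ≠ 0) (hβ2 : β^2 = a*β + b) (k : ℕ) :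
    xv q β (orb a b q β p (k+1)) = β * xv q β (orb a b q β p k) - dg a b q β p k := by
  apply mul_left_cancel₀ hq
  have h := qX a b q β p hq k
  have h' := qX a b q β p hq (k+1)
  rw [orb_fst, orb_snd] at h'
  rw [h']
  push_cast
  linear_combination (-β)*h + (-(((orb a b q β p k).2 : ℤ):ℝ))*hβ2

lemma Yrec (hq : (q:ℝ) ≠ 0) (hβ2 : β^2 = a*β + b) (k : ℕ) :
    yv a q β (orb a b q β p (k+1))
      = ((a:ℝ) - β) * yv a q β (orb a b q β p k) - dg a b q β p k := by
  apply mul_left_cancel₀ hq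
  have h := qY a b q β p hq k
  have h' := qY a b q β p hq (k+1)
  rw [orb_fst, orb_snd] at h'
  rw [h']
  push_cast
  linear_combination (-((a:ℝ)-β))*h + (-(((orb a b q β p k).2 : ℤ):ℝ))*hβ2

end rec

lemma le_of_mul_le {u v w : ℝ} (hw : 0 < w) (h : (u - v)*w ≤ 0) : u ≤ v := by nlinarith
lemma lt_of_mul_lt {u v w : ℝ} (hw : 0 < w) (h : (u - v)*w < 0) : u < v := by nlinarith
lemma eq_of_mul_eq {u v w : ℝ} (hw : 0 < w) (h : (u - v)*w = 0) : u = v := by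
  rcases mul_eq_zero.mp h with h1 | h1
  · linarith
  · exact absurd h1 hw.ne'

def betaT' (β : ℝ) (x : ℝ) : ℝ := Int.fract (β * x)


set_option maxHeartbeats 2000000 in
theorem consts (a b : ℤ) (hb : 1 ≤ b) (hba : b ≤ a) (β : ℝ)
    (hβ2 : β^2 = a*β + b) (hβa : (a:ℝ) < β) (hβa1 : β < (a:ℝ)+1)
    (hX : 0 < -(a:ℝ)/(1-(β-(a:ℝ))^2) + β + 1) :
    ∃ m M : ℝ, m = -(a:ℝ)/(1-(β-(a:ℝ))^2) ∧
      m < 0 ∧ 1 ≤ M ∧ ((a:ℝ) - β)*m = M ∧ ((a:ℝ) - β)*M = m + (a:ℝ) ∧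
      m + β ≤ 0 ∧ M < β ∧ M - m ≤ 2*β := by
  have hbR : (1:ℝ) ≤ (b:ℝ) := by exact_mod_cast hb
  have habR : (b:ℝ) ≤ (a:ℝ) := by exact_mod_cast hba
  have haR : (1:ℝ) ≤ (a:ℝ) := le_trans hbR habR
  have hβ1 : 1 < β := by nlinarith
  have hβ0 : 0 < β := by linarith
  have hcb : (β - (a:ℝ)) * β = b := by linear_combination hβ2
  have hc0 : 0 < β - (a:ℝ) := by linarith
  have hc1 : β - (a:ℝ) < 1 := by linarith
  have hb0R : (0:ℝ) < b := by linarith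
  have hD0 : 0 < 1 - (β - (a:ℝ))^2 := by nlinarith
  obtain ⟨m, hm⟩ : ∃ m : ℝ, m = -(a:ℝ)/(1-(β-(a:ℝ))^2) := ⟨_, rfl⟩
  obtain ⟨M, hM⟩ : ∃ M : ℝ, M = (a:ℝ)*(β-(a:ℝ))/(1-(β-(a:ℝ))^2) := ⟨_, rfl⟩
  have hmD : m * (1-(β-(a:ℝ))^2) = -(a:ℝ) := by rw [hm]; field_simp
  have hMD : M * (1-(β-(a:ℝ))^2) = (a:ℝ)*(β-(a:ℝ)) := by rw [hM]; field_simp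
  have hbs : β*(β-(a:ℝ))^2 = (b:ℝ)*(β-(a:ℝ)) := by
    linear_combination (β-(a:ℝ))*hcb
  have hm0 : m < 0 := by
    apply lt_of_mul_lt hD0; rw [sub_zero, hmD]; linarith
  have hM1 : (1:ℝ) ≤ M := by
    apply le_of_mul_le hD0; nlinarith [hMD, hcb]
  have hmM : ((a:ℝ) - β)*m = M := by
    apply eq_of_mul_eq hD0; linear_combination ((a:ℝ)-β)*hmD - hMD
  have hMm : ((a:ℝ) - β)*M = m + (a:ℝ) := by
    apply eq_of_mul_eq hD0; linear_combination ((a:ℝ)-β)*hMD - hmD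
  have hX1 : m + β ≤ 0 := by
    apply le_of_mul_le hD0
    nlinarith [hmD, hbs, mul_nonneg hc0.le (show (0:ℝ) ≤ (b:ℝ)-1 by linarith)]
  have hmβ1 : -m < β + 1 := by
    have hXm : 0 < m + β + 1 := by rw [hm]; exact hX
    linarith
  have hMβ : M < β := by
    have e1 : M = (β-(a:ℝ))*(-m) := by linarith [hmM]
    have e2 : (β-(a:ℝ))*(-m) < (β-(a:ℝ))*(β+1) := by
      exact mul_lt_mul_of_pos_left hmβ1 hc0
    have e3 : (β-(a:ℝ))*(β+1) = (b:ℝ)+β-(a:ℝ) := by linear_combination hβ2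
    linarith
  -- integer step towards M - m ≤ 2β
  have haD : (a:ℝ) < (β+1)*(1-(β-(a:ℝ))^2) := by
    nlinarith [hmD, hD0, hmβ1]
  have hDβ : (1-(β-(a:ℝ))^2)*β^2 = β^2 - (b:ℝ)^2 := by
    linear_combination (-(β-(a:ℝ))*β - (b:ℝ))*hcb
  have h1 : (a:ℝ)*β^2 < (β+1)*(β^2-(b:ℝ)^2) := by
    have h := mul_lt_mul_of_pos_right haD (show (0:ℝ) < β^2 by positivity)
    calc (a:ℝ)*β^2 < (β+1)*(1-(β-(a:ℝ))^2)*β^2 := h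
      _ = (β+1)*(β^2-(b:ℝ)^2) := by linear_combination (β+1)*hDβ
  have hβ3 : β^3 = (a:ℝ)*((a:ℝ)*β+(b:ℝ)) + (b:ℝ)*β := by
    linear_combination (β + (a:ℝ)) * hβ2
  have e7 : (β+1)*(β^2-(b:ℝ)^2) = (a:ℝ)*β^2 + (a:ℝ)*β - ((b:ℝ)^2-(b:ℝ))*(β+1) := by
    linear_combination (β+1)*hβ2
  have h2 : ((b:ℝ)^2-(b:ℝ))*(β+1) < (a:ℝ)*β := by linarith [h1, e7]
  have hbb : (0:ℝ) ≤ (b:ℝ)^2-(b:ℝ) := by nlinarith [hbR]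
  have h3 : (b:ℝ)*((b:ℝ)-1) < (a:ℝ) := by
    by_contra hcon
    push_neg at hcon
    have hab : (a:ℝ)*β ≤ ((b:ℝ)^2-(b:ℝ))*β := by
      apply mul_le_mul_of_nonneg_right ?_ hβ0.le
      nlinarith [hcon]
    nlinarith [h2, hbb, hab]
  have h4 : b*(b-1) + 1 ≤ a := by
    have : (b*(b-1) : ℤ) < a := by exact_mod_cast h3
    omega
  have h5 : 4*(b*(b-1)) ≤ a^2 := by nlinarith [h4, sq_nonneg (b*b - b - 1), hb, hba]
  have h5R : 4*((b:ℝ)*((b:ℝ)-1)) ≤ (a:ℝ)^2 := by exact_mod_cast h5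
  have h7 : (2*β-(a:ℝ))^2 = (a:ℝ)^2+4*(b:ℝ) := by linear_combination 4*hβ2
  have h2βa : 0 < 2*β-(a:ℝ) := by linarith
  have h6 : (a:ℝ) + 2*(b:ℝ) ≤ 2*β := by nlinarith [h7, h5R, h2βa, hb0R]
  have hs1 : 0 < 1 - (β-(a:ℝ)) := by linarith
  have e5 : (M-m)*(1-(β-(a:ℝ))^2) = (a:ℝ)*((β-(a:ℝ))+1) := by
    linear_combination hMD - hmD
  have e6 : (M-m)*(1-(β-(a:ℝ))) = (a:ℝ) := by
    have h1s : (0:ℝ) < 1+(β-(a:ℝ)) := by linarith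
    apply eq_of_mul_eq h1s
    linear_combination e5
  have hMm2β : M - m ≤ 2*β := by
    apply le_of_mul_le hs1
    nlinarith [e6, h6, hcb]
  exact ⟨m, M, hm, hm0, hM1, hmM, hMm, hX1, hMβ, hMm2β⟩


lemma int_nonpos_of_mul {b w z : ℤ} (hb : 1 ≤ b) (h : b*w = z) (hz : z ≤ 0) : w ≤ 0 := by
  nlinarith
lemma int_pos_of_mul {b w z : ℤ} (hb : 1 ≤ b) (h : b*w = z) (hz : 1 ≤ z) : 1 ≤ w := by
  nlinarith
lemma int_neg_of_mul {b w z : ℤ} (hb : 1 ≤ b) (h : b*w = z) (hz : z ≤ -1) : w ≤ -1 := by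
  nlinarith
lemma int_nonneg_of_mul {b w z : ℤ} (hb : 1 ≤ b) (h : b*w = z) (hz : 0 ≤ z) : 0 ≤ w := by
  nlinarith


lemma F1 {β M Q1 A : ℝ} (hβ0 : 0 < β) (hMβ : M < β) (h1 : 1 ≤ Q1)
    (he : A = -Q1*β) (hA : -M < A) : False := by nlinarith
lemma F2 {β Q1 A : ℝ} (hβ1 : 1 < β) (h2 : Q1 ≤ -2) (he : A = -Q1*β)
    (hA : A < β+1) : False := by nlinarith
lemma F3 {β Mm Q1 A : ℝ} (hβ0 : 0 < β) (hMm : Mm ≤ 2*β) (h2 : 2 ≤ Q1)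
    (he : A = -Q1*β) (hA : -Mm < A) : False := by nlinarith
lemma F4 {β Mm Q1 A : ℝ} (hβ0 : 0 < β) (hMm : Mm ≤ 2*β) (h2 : Q1 ≤ -2)
    (he : A = -Q1*β) (hA : A < Mm) : False := by nlinarith
lemma F5 {β Mm Q' A : ℝ} (hβ0 : 0 < β) (hMm : Mm ≤ 2*β) (h2 : 2 ≤ Q')
    (he : A = -1 - Q'*β) (hA : -Mm < A) : False := by nlinarith
lemma F6 {β Mm Q' A : ℝ} (hβ0 : 0 < β) (hMm : Mm ≤ 2*β) (h2 : Q' ≤ -2)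
    (he : A = 1 - Q'*β) (hA : A < Mm) : False := by nlinarith
lemma F7 {β M Q' A : ℝ} (hβ0 : 0 < β) (hMβ : M < β) (h1 : 1 ≤ Q')
    (he : A = -1 - Q'*β) (hA : -M < A) : False := by nlinarith
lemma F8 {β Q' A : ℝ} (hβ0 : 0 < β) (h1 : Q' ≤ -1) (he : A = 1 - Q'*β)
    (hA : A < β+1) : False := by nlinarith

set_option maxHeartbeats 4000000 in
theorem key (a b : ℤ) (hb : 1 ≤ b) (hba : b ≤ a) (β : ℝ)
    (hβ2 : β^2 = a*β + b) (hβa : (a:ℝ) < β) (hβa1 : β < (a:ℝ)+1)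
    (x : ℚ) (hx0 : 0 ≤ (x:ℝ)) (hden : Int.gcd (x.den : ℤ) b = 1)
    (hxX : (x:ℝ) < -(a:ℝ)/(1-(β-(a:ℝ))^2) + β + 1) :
    ∃ k : ℕ, 1 ≤ k ∧ (betaT' β)^[k] (x:ℝ) = (x:ℝ) := by
  classical
  have hX : 0 < -(a:ℝ)/(1-(β-(a:ℝ))^2) + β + 1 := lt_of_le_of_lt hx0 hxX
  obtain ⟨m, M, hmdef, hm0, hM1, hmM, hMm, hX1, hMβ, hMm2β⟩ :=
    consts a b hb hba β hβ2 hβa hβa1 hX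
  have hxX' : (x:ℝ) < m + β + 1 := by rw [← hmdef] at hxX; exact hxX
  have hbR : (1:ℝ) ≤ (b:ℝ) := by exact_mod_cast hb
  have habR : (b:ℝ) ≤ (a:ℝ) := by exact_mod_cast hba
  have haR : (1:ℝ) ≤ (a:ℝ) := le_trans hbR habR
  have hβ1 : 1 < β := by linarith
  have hβ0 : 0 < β := by linarith
  have hcb : (β - (a:ℝ)) * β = b := by linear_combination hβ2
  have hb0R : (0:ℝ) < b := by linarith
  -- rational set-up
  set q : ℤ := (x.den : ℤ) with hq_def
  set p : ℤ := x.num with hp_def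
  have hq0 : 0 < q := by rw [hq_def]; exact_mod_cast x.pos
  have hq0R : (0:ℝ) < (q:ℝ) := by exact_mod_cast hq0
  have hqne : (q:ℝ) ≠ 0 := ne_of_gt hq0R
  have hcop : IsCoprime q b := by
    rw [Int.isCoprime_iff_gcd_eq_one]; exact hden
  have hqx : (q:ℝ) * (x:ℝ) = (p:ℝ) := by
    rw [Rat.cast_def, hp_def, hq_def]
    push_cast
    field_simp
  set o : ℕ → ℤ × ℤ := orb a b q β p with ho_def
  set d : ℕ → ℤ := dg a b q β p with hd_def
  set Xf : ℕ → ℝ := fun k => xv q β (o k) with hXf_def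
  set Yf : ℕ → ℝ := fun k => yv a q β (o k) with hYf_def
  have hqX : ∀ k, (q:ℝ) * Xf k = ((o k).1 : ℝ) + ((o k).2 : ℝ) * β :=
    fun k => qX a b q β p hqne k
  have hqY : ∀ k, (q:ℝ) * Yf k = ((o k).1 : ℝ) + ((o k).2 : ℝ) * ((a:ℝ)-β) :=
    fun k => qY a b q β p hqne k
  have hXrec : ∀ k, Xf (k+1) = β * Xf k - d k := fun k => Xrec a b q β p hqne hβ2 k
  have hYrec : ∀ k, Yf (k+1) = ((a:ℝ)-β) * Yf k - d k := fun k => Yrec a b q β p hqne hβ2 k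
  have hdg : ∀ k, d k = ⌊β * Xf k⌋ := fun k => rfl
  have hu1 : ∀ k, (o (k+1)).1 = b * (o k).2 - d k * q := fun k => rfl
  have hv1 : ∀ k, (o (k+1)).2 = (o k).1 + a * (o k).2 := fun k => rfl
  have hX0 : Xf 0 = (x:ℝ) := by
    apply mul_left_cancel₀ hqne
    rw [hqX 0, hqx]
    norm_num [show (o 0).1 = p from rfl, show (o 0).2 = 0 from rfl]
  have hY0 : Yf 0 = (x:ℝ) := by
    apply mul_left_cancel₀ hqne
    rw [hqY 0, hqx]
    norm_num [show (o 0).1 = p from rfl, show (o 0).2 = 0 from rfl]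
  -- orbit in [0,1)
  have hXb : ∀ k, 0 ≤ Xf k ∧ Xf k < 1 := by
    intro k
    induction k with
    | zero =>
      rw [hX0]; exact ⟨hx0, by linarith⟩
    | succ k _ =>
      have : Xf (k+1) = Int.fract (β * Xf k) := by
        rw [hXrec k, hdg k, Int.fract]
      rw [this]
      exact ⟨Int.fract_nonneg _, Int.fract_lt_one _⟩
  have hd0 : ∀ k, 0 ≤ d k := by
    intro k
    rw [hdg]
    exact Int.floor_nonneg.mpr (mul_nonneg hβ0.le (hXb k).1)
  have hda : ∀ k, d k ≤ a := by
    intro k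
    rw [hdg]
    have h1 : β * Xf k < (a:ℝ) + 1 := by
      nlinarith [(hXb k).2, (hXb k).1, hβ0]
    have h2 : ⌊β * Xf k⌋ < a + 1 := by
      apply Int.floor_lt.mpr
      push_cast
      exact h1
    omega
  have hdaR : ∀ k, ((d k : ℝ)) ≤ (a:ℝ) := by
    intro k; exact_mod_cast hda k
  have hd0R : ∀ k, (0:ℝ) ≤ (d k : ℝ) := by
    intro k; exact_mod_cast hd0 k
  -- conjugate orbit in (m, M)
  have hYb : ∀ k, m < Yf k ∧ Yf k < M := by
    intro k
    induction k with
    | zero =>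
      rw [hY0]
      exact ⟨by linarith, by linarith⟩
    | succ k ih =>
      rw [hYrec k]
      obtain ⟨h1, h2⟩ := ih
      have hneg : (a:ℝ) - β < 0 := by linarith
      constructor
      · have h3 : ((a:ℝ)-β)*M < ((a:ℝ)-β)*(Yf k) := mul_lt_mul_of_neg_left h2 hneg
        have := hdaR k
        linarith [hMm]
      · have h3 : ((a:ℝ)-β)*(Yf k) < ((a:ℝ)-β)*m := mul_lt_mul_of_neg_left h1 hneg
        have := hd0R k
        linarith [hmM]
  -- iterates of the beta map
  have hT : ∀ k, (betaT' β)^[k] (x:ℝ) = Xf k := by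
    intro k
    induction k with
    | zero => simpa using hX0.symm
    | succ k ih =>
      rw [Function.iterate_succ_apply', ih]
      show Int.fract (β * Xf k) = Xf (k+1)
      rw [hXrec k, hdg k, Int.fract]
  -- integer bounds on the orbit states
  have hvb : ∀ k, -(q*(2*a+3)) ≤ (o k).2 ∧ (o k).2 ≤ q*(2*a+3) := by
    intro k
    have e1 : ((o k).2:ℝ)*(2*β-(a:ℝ)) = (q:ℝ)*Xf k - (q:ℝ)*Yf k := by
      rw [hqX, hqY]; ring
    have h2βa : (1:ℝ) < 2*β-(a:ℝ) := by linarith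
    have hdiff1 : Xf k - Yf k ≤ 2*(a:ℝ)+3 := by
      have h1 := (hXb k).2; have h2 := (hYb k).1
      linarith [hMm2β, hM1, hβa1]
    have hdiff2 : -(2*(a:ℝ)+3) ≤ Xf k - Yf k := by
      have h1 := (hXb k).1; have h2 := (hYb k).2
      linarith [hMβ, hβa1]
    have hq23 : (0:ℝ) ≤ (q:ℝ)*(2*(a:ℝ)+3) := by positivity
    have hqd1 : (q:ℝ)*Xf k - (q:ℝ)*Yf k ≤ (q:ℝ)*(2*(a:ℝ)+3) := by
      have := mul_le_mul_of_nonneg_left hdiff1 hq0R.le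
      nlinarith [this]
    have hqd2 : -((q:ℝ)*(2*(a:ℝ)+3)) ≤ (q:ℝ)*Xf k - (q:ℝ)*Yf k := by
      have := mul_le_mul_of_nonneg_left hdiff2 hq0R.le
      nlinarith [this]
    have hr1 : ((o k).2:ℝ) ≤ (q:ℝ)*(2*(a:ℝ)+3) := by
      nlinarith [e1, hqd1, hqd2, h2βa, hq23]
    have hr2 : -((q:ℝ)*(2*(a:ℝ)+3)) ≤ ((o k).2:ℝ) := by
      nlinarith [e1, hqd1, hqd2, h2βa, hq23]
    constructor
    · exact_mod_cast hr2
    · exact_mod_cast hr1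
  have hub : ∀ k, -(q*(2*a+3)*(a+1) + q) ≤ (o k).1 ∧ (o k).1 ≤ q*(2*a+3)*(a+1) + q := by
    intro k
    have e2 : ((o k).1:ℝ) = (q:ℝ)*Xf k - ((o k).2:ℝ)*β := by
      rw [hqX]; ring
    obtain ⟨hv1', hv2'⟩ := hvb k
    have hv1R : -((q:ℝ)*(2*(a:ℝ)+3)) ≤ ((o k).2:ℝ) := by exact_mod_cast hv1'
    have hv2R : ((o k).2:ℝ) ≤ (q:ℝ)*(2*(a:ℝ)+3) := by exact_mod_cast hv2'
    have hq23 : (0:ℝ) < (q:ℝ)*(2*(a:ℝ)+3) := by positivity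
    have hr1 : ((o k).1:ℝ) ≤ (q:ℝ)*(2*(a:ℝ)+3)*((a:ℝ)+1) + q := by
      nlinarith [e2, (hXb k).1, (hXb k).2, hq0R, hβ0, hβa1, hv1R, hv2R, hq23, haR]
    have hr2 : -((q:ℝ)*(2*(a:ℝ)+3)*((a:ℝ)+1) + q) ≤ ((o k).1:ℝ) := by
      nlinarith [e2, (hXb k).1, (hXb k).2, hq0R, hβ0, hβa1, hv1R, hv2R, hq23, haR]
    constructor
    · exact_mod_cast hr2
    · exact_mod_cast hr1
  -- pigeonhole: the orbit revisits a state
  have hcol : ∃ i j : ℕ, i < j ∧ o i = o j := by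
    set B : ℤ := q*(2*a+3)*(a+1) + q with hB_def
    have hBb : q*(2*a+3) ≤ B := by
      rw [hB_def]
      nlinarith [mul_nonneg (mul_nonneg hq0.le (by omega : (0:ℤ) ≤ 2*a+3))
        (by omega : (0:ℤ) ≤ a), hq0]
    have hmaps : ∀ k : ℕ, k ∈ Finset.range ((Finset.Icc ((-B,-B) : ℤ×ℤ) (B,B)).card + 1) →
        o k ∈ Finset.Icc ((-B,-B) : ℤ×ℤ) (B,B) := by
      intro k _
      rw [Finset.mem_Icc]
      obtain ⟨h1, h2⟩ := hub k
      obtain ⟨h3, h4⟩ := hvb k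
      exact ⟨⟨by omega, by omega⟩, ⟨by omega, by omega⟩⟩
    obtain ⟨i, hi, j, hj, hne, heq⟩ :=
      Finset.exists_ne_map_eq_of_card_lt_of_maps_to
        (by rw [Finset.card_range]; omega) hmaps
    rcases hne.lt_or_gt with h | h
    · exact ⟨i, j, h, heq⟩
    · exact ⟨j, i, h, heq.symm⟩
  -- least index from which the orbit repeats
  set i0 : ℕ := Nat.find hcol with hi0_def
  obtain ⟨j, hij, hoij⟩ := Nat.find_spec hcol
  have hmin : ∀ i', i' < i0 → ¬ (∃ j', i' < j' ∧ o i' = o j') := by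
    intro i' h
    exact Nat.find_min hcol h
  have hi00 : i0 = 0 := by
    by_contra hi0ne
    have hi01 : 1 ≤ i0 := Nat.one_le_iff_ne_zero.mpr hi0ne
    -- backward step: divisibility transfer
    have hstep : ∀ (s : ℕ) (P Q : ℤ), s + 1 ≤ i0 →
        (o (i0 - s)).1 - (o (j - s)).1 = q * P →
        (o (i0 - s)).2 - (o (j - s)).2 = q * Q →
        ∃ P' Q' : ℤ, ((o (i0 - (s+1))).1 - (o (j - (s+1))).1 = q * P' ∧
            (o (i0 - (s+1))).2 - (o (j - (s+1))).2 = q * Q') ∧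
          b * Q' = P + (d (i0 - (s+1)) - d (j - (s+1))) ∧ P' = Q - a * Q' := by
      intro s P Q hs hPe hQe
      have hk1 : i0 - s = (i0 - (s+1)) + 1 := by omega
      have hl1 : j - s = (j - (s+1)) + 1 := by omega
      rw [hk1, hl1, hu1, hu1] at hPe
      rw [hk1, hl1, hv1, hv1] at hQe
      have hdvd : q ∣ ((o (i0 - (s+1))).2 - (o (j - (s+1))).2) := by
        have h1 : b * ((o (i0 - (s+1))).2 - (o (j - (s+1))).2)
            = q * (P + (d (i0 - (s+1)) - d (j - (s+1)))) := by
          linear_combination hPe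
        exact hcop.dvd_of_dvd_mul_left ⟨P + (d (i0 - (s+1)) - d (j - (s+1))), h1⟩
      obtain ⟨Q', hQ'⟩ := hdvd
      refine ⟨Q - a * Q', Q', ⟨?_, hQ'⟩, ?_, rfl⟩
      · linear_combination hQe - a * hQ'
      · have hz : q * (b * Q' - (P + (d (i0 - (s+1)) - d (j - (s+1))))) = 0 := by
          linear_combination hPe - b * hQ'
        rcases mul_eq_zero.mp hz with h | h
        · exact absurd h (by omega)
        · omega
    -- real values of the backward differences
    have hval : ∀ (s : ℕ) (P Q : ℤ),
        (o (i0 - s)).1 - (o (j - s)).1 = q * P →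
        (o (i0 - s)).2 - (o (j - s)).2 = q * Q →
        Xf (i0 - s) - Xf (j - s) = (P:ℝ) + (Q:ℝ)*β ∧
          Yf (i0 - s) - Yf (j - s) = (P:ℝ) + (Q:ℝ)*((a:ℝ)-β) := by
      intro s P Q hPe hQe
      have hPR : ((o (i0-s)).1:ℝ) - ((o (j-s)).1:ℝ) = (q:ℝ)*(P:ℝ) := by exact_mod_cast hPe
      have hQR : ((o (i0-s)).2:ℝ) - ((o (j-s)).2:ℝ) = (q:ℝ)*(Q:ℝ) := by exact_mod_cast hQe
      constructor
      · apply mul_left_cancel₀ hqne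
        rw [mul_sub, hqX, hqX]
        linear_combination hPR + β * hQR
      · apply mul_left_cancel₀ hqne
        rw [mul_sub, hqY, hqY]
        linear_combination hPR + ((a:ℝ)-β) * hQR
    have hζbnd : ∀ k l : ℕ, -(1:ℝ) < Xf k - Xf l ∧ Xf k - Xf l < 1 := by
      intro k l
      obtain ⟨h1, h2⟩ := hXb k
      obtain ⟨h3, h4⟩ := hXb l
      exact ⟨by linarith, by linarith⟩
    have hηbnd : ∀ k l : ℕ, -(M-m) < Yf k - Yf l ∧ Yf k - Yf l < M - m := by
      intro k l
      obtain ⟨h1, h2⟩ := hYb k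
      obtain ⟨h3, h4⟩ := hYb l
      exact ⟨by linarith, by linarith⟩
    -- first backward step
    have hP0 : (o (i0 - 0)).1 - (o (j - 0)).1 = q * 0 := by
      rw [Nat.sub_zero, Nat.sub_zero, hoij]; ring
    have hQ0 : (o (i0 - 0)).2 - (o (j - 0)).2 = q * 0 := by
      rw [Nat.sub_zero, Nat.sub_zero, hoij]; ring
    obtain ⟨P1, Q1, ⟨hP1, hQ1⟩, hbQ1, hPQ1⟩ := hstep 0 0 0 (by omega) hP0 hQ0
    simp only [Nat.zero_add] at hP1 hQ1 hbQ1
    have hQ1ne : Q1 ≠ 0 := by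
      intro h0
      have hP10 : P1 = 0 := by rw [h0] at hPQ1; simpa using hPQ1
      apply hmin (i0 - 1) (by omega)
      refine ⟨j - 1, by omega, ?_⟩
      have e1 : (o (i0-1)).1 = (o (j-1)).1 := by
        have h := hP1; rw [hP10] at h; simp at h; omega
      have e2 : (o (i0-1)).2 = (o (j-1)).2 := by
        have h := hQ1; rw [h0] at h; simp at h; omega
      exact Prod.ext e1 e2
    obtain ⟨hζ1, hη1⟩ := hval 1 P1 Q1 hP1 hQ1
    have hP1R : (P1:ℝ) = 0 - (a:ℝ)*(Q1:ℝ) := by exact_mod_cast hPQ1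
    have hη1' : Yf (i0-1) - Yf (j-1) = -(Q1:ℝ)*β := by
      rw [hη1, hP1R]; ring
    rcases eq_or_lt_of_le hi01 with hi1 | hi2
    · -- i0 = 1 : terminal at the first backward step
      have h01 : i0 - 1 = 0 := by omega
      rw [h01] at hη1' hζ1 hP1 hQ1
      have hA1 : -(M) < Yf 0 - Yf (j-1) := by
        have h := (hYb (j-1)).2
        rw [hY0]; linarith
      have hA2 : Yf 0 - Yf (j-1) < β + 1 := by
        have h := (hYb (j-1)).1
        rw [hY0]; linarith
      rcases (by omega : 1 ≤ Q1 ∨ Q1 = -1 ∨ Q1 ≤ -2) with hq1 | hq1 | hq1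
      · have hQR : (1:ℝ) ≤ (Q1:ℝ) := by exact_mod_cast hq1
        exact F1 hβ0 hMβ hQR hη1' hA1
      · -- gap case : Q1 = -1
        have hP1a : P1 = a := by rw [hq1] at hPQ1; simpa using hPQ1
        have ho01 : (o 0).1 = p := rfl
        have ho02 : (o 0).2 = 0 := rfl
        have e1 : (o (j-1)).1 = p - a*q := by
          have h := hP1; rw [hP1a, ho01] at h; linear_combination -h
        have e2 : (o (j-1)).2 = q := by
          have h := hQ1; rw [hq1, ho02] at h; linear_combination -h
        have hXπ : Xf (j-1) = (x:ℝ) + (β - (a:ℝ)) := by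
          apply mul_left_cancel₀ hqne
          rw [hqX (j-1), e1, e2]
          push_cast
          linear_combination -hqx
        have hYπ : Yf (j-1) = (x:ℝ) - β := by
          apply mul_left_cancel₀ hqne
          rw [hqY (j-1), e1, e2]
          push_cast
          linear_combination -hqx
        obtain ⟨t, ht⟩ : ∃ t, j - 1 = t + 1 := ⟨j - 2, by omega⟩
        have hYrecπ : Yf (j-1) = ((a:ℝ)-β)*Yf t - d t := by
          rw [ht]; exact hYrec t
        have h5 : ((a:ℝ)-β)*M < ((a:ℝ)-β)*(Yf t) :=
          mul_lt_mul_of_neg_left (hYb t).2 (by linarith)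
        have h6 : Yf (j-1) < m + 1 := by rw [hYπ]; linarith
        have h7 : (a:ℝ) - 1 < (d t : ℝ) := by
          rw [hYrecπ] at h6
          linarith [hMm]
        have h8 : d t = a := by
          have h' : a - 1 < d t := by exact_mod_cast h7
          have := hda t
          omega
        have h9 : Xf (j-1) < β - (a:ℝ) := by
          have hx' := hXrec t
          rw [← ht] at hx'
          rw [hx', h8]
          have h := mul_lt_mul_of_pos_left (hXb t).2 hβ0
          push_cast
          linarith
        have h10 : β * Xf (j-1) < (b:ℝ) := by
          have h := mul_lt_mul_of_pos_left h9 hβ0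
          have h' : β * (β - (a:ℝ)) = (b:ℝ) := by linarith [hcb]
          linarith
        have h11 : d (j-1) < b := by
          rw [hdg]
          exact Int.floor_lt.mpr (by push_cast; exact h10)
        have h12 : β * Xf (j-1) = β*(x:ℝ) + (b:ℝ) := by
          rw [hXπ]; linear_combination hβ2
        have h13 : d (j-1) = d 0 + b := by
          have hfl : d (j-1) = ⌊β * (x:ℝ) + ((b:ℤ):ℝ)⌋ := by rw [hdg (j-1), h12]
          rw [hfl, Int.floor_add_intCast]
          have hfl0 : d 0 = ⌊β * (x:ℝ)⌋ := by rw [hdg 0, hX0]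
          omega
        have := hd0 0
        omega
      · have hQR : (Q1:ℝ) ≤ -2 := by exact_mod_cast hq1
        exact F2 hβ1 hQR hη1' hA2
    · -- 2 ≤ i0
      have hQ1pm : Q1 = 1 ∨ Q1 = -1 := by
        rcases (by omega : Q1 = 1 ∨ Q1 = -1 ∨ 2 ≤ Q1 ∨ Q1 ≤ -2) with h | h | h | h
        · exact Or.inl h
        · exact Or.inr h
        · exfalso
          have hQR : (2:ℝ) ≤ (Q1:ℝ) := by exact_mod_cast h
          have hbd := (hηbnd (i0-1) (j-1)).1
          exact F3 hβ0 hMm2β hQR hη1' hbd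
        · exfalso
          have hQR : (Q1:ℝ) ≤ -2 := by exact_mod_cast h
          have hbd := (hηbnd (i0-1) (j-1)).2
          exact F4 hβ0 hMm2β hQR hη1' hbd
      -- the four admissible backward difference states
      have hinv : ∀ s : ℕ, 1 ≤ s → s ≤ i0 - 1 →
          ∃ P Q : ℤ, ((o (i0-s)).1 - (o (j-s)).1 = q*P ∧ (o (i0-s)).2 - (o (j-s)).2 = q*Q) ∧
            ((P = a+1 ∧ Q = -1) ∨ (P = -(a+1) ∧ Q = 1) ∨
             (P = -a ∧ Q = 1) ∨ (P = a ∧ Q = -1)) := by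
        intro s
        induction s with
        | zero => omega
        | succ n ih =>
          intro _ hsle
          rcases Nat.eq_zero_or_pos n with hn0 | hn0
          · subst hn0
            simp only [Nat.zero_add]
            refine ⟨P1, Q1, ⟨hP1, hQ1⟩, ?_⟩
            rcases hQ1pm with h | h
            · right; right; left
              refine ⟨?_, h⟩
              rw [h] at hPQ1; simpa using hPQ1
            · right; right; right
              refine ⟨?_, h⟩
              rw [h] at hPQ1; simpa using hPQ1
          · obtain ⟨P, Q, ⟨hPp, hQp⟩, hgood⟩ := ih (by omega) (by omega)
            obtain ⟨P', Q', ⟨hP', hQ'⟩, hbQ', hPQ'⟩ := hstep n P Q (by omega) hPp hQp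
            obtain ⟨hζ', hη'⟩ := hval (n+1) P' Q' hP' hQ'
            have hPR' : (P':ℝ) = (Q:ℝ) - (a:ℝ)*(Q':ℝ) := by exact_mod_cast hPQ'
            have hη2 : Yf (i0-(n+1)) - Yf (j-(n+1)) = (Q:ℝ) - (Q':ℝ)*β := by
              rw [hη', hPR']; ring
            have hζ2 : Xf (i0-(n+1)) - Xf (j-(n+1)) = (Q:ℝ) + (Q':ℝ)*(β - (a:ℝ)) := by
              rw [hζ', hPR']; ring
            have hζb := hζbnd (i0-(n+1)) (j-(n+1))
            have hηb := hηbnd (i0-(n+1)) (j-(n+1))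
            have hΔ1 : d (i0-(n+1)) - d (j-(n+1)) ≤ a := by
              have h1 := hd0 (j-(n+1)); have h2 := hda (i0-(n+1)); omega
            have hΔ2 : -a ≤ d (i0-(n+1)) - d (j-(n+1)) := by
              have h1 := hd0 (i0-(n+1)); have h2 := hda (j-(n+1)); omega
            refine ⟨P', Q', ⟨hP', hQ'⟩, ?_⟩
            rcases hgood with ⟨hP, hQ⟩ | ⟨hP, hQ⟩ | ⟨hP, hQ⟩ | ⟨hP, hQ⟩
            · -- from (a+1, -1)
              have hz : 1 ≤ b*Q' := by rw [hbQ', hP]; omega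
              have h1 : 1 ≤ Q' := int_pos_of_mul hb rfl hz
              have hQR : (Q:ℝ) = -1 := by rw [hQ]; push_cast; ring
              rcases (by omega : Q' = 1 ∨ 2 ≤ Q') with h2 | h2
              · right; left
                refine ⟨?_, h2⟩
                rw [hQ, h2] at hPQ'; omega
              · exfalso
                have hQ'R : (2:ℝ) ≤ (Q':ℝ) := by exact_mod_cast h2
                rw [hQR] at hη2
                exact F5 hβ0 hMm2β hQ'R hη2 hηb.1
            · -- from (-(a+1), 1)
              have hz : b*Q' ≤ -1 := by rw [hbQ', hP]; omega
              have h1 : Q' ≤ -1 := int_neg_of_mul hb rfl hz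
              have hQR : (Q:ℝ) = 1 := by rw [hQ]; push_cast; ring
              rcases (by omega : Q' = -1 ∨ Q' ≤ -2) with h2 | h2
              · left
                refine ⟨?_, h2⟩
                rw [hQ, h2] at hPQ'; omega
              · exfalso
                have hQ'R : (Q':ℝ) ≤ -2 := by exact_mod_cast h2
                rw [hQR] at hη2
                exact F6 hβ0 hMm2β hQ'R hη2 hηb.2
            · -- from (-a, 1)
              have hz : b*Q' ≤ 0 := by rw [hbQ', hP]; omega
              have h1 : Q' ≤ 0 := int_nonpos_of_mul hb rfl hz
              have hQR : (Q:ℝ) = 1 := by rw [hQ]; push_cast; ring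
              rcases (by omega : Q' = 0 ∨ Q' = -1 ∨ Q' ≤ -2) with h2 | h2 | h2
              · exfalso
                have hQ'R : (Q':ℝ) = 0 := by rw [h2]; push_cast; ring
                rw [hQ'R, hQR] at hζ2
                have := hζb.2
                rw [hζ2] at this
                linarith
              · left
                refine ⟨?_, h2⟩
                rw [hQ, h2] at hPQ'; omega
              · exfalso
                have hQ'R : (Q':ℝ) ≤ -2 := by exact_mod_cast h2
                rw [hQR] at hη2
                exact F6 hβ0 hMm2β hQ'R hη2 hηb.2
            · -- from (a, -1)
              have hz : 0 ≤ b*Q' := by rw [hbQ', hP]; omega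
              have h1 : 0 ≤ Q' := int_nonneg_of_mul hb rfl hz
              have hQR : (Q:ℝ) = -1 := by rw [hQ]; push_cast; ring
              rcases (by omega : Q' = 0 ∨ Q' = 1 ∨ 2 ≤ Q') with h2 | h2 | h2
              · exfalso
                have hQ'R : (Q':ℝ) = 0 := by rw [h2]; push_cast; ring
                rw [hQ'R, hQR] at hζ2
                have := hζb.1
                rw [hζ2] at this
                linarith
              · right; left
                refine ⟨?_, h2⟩
                rw [hQ, h2] at hPQ'; omega
              · exfalso
                have hQ'R : (2:ℝ) ≤ (Q':ℝ) := by exact_mod_cast h2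
                rw [hQR] at hη2
                exact F5 hβ0 hMm2β hQ'R hη2 hηb.1
      -- terminal backward step
      obtain ⟨P, Q, ⟨hPp, hQp⟩, hgood⟩ := hinv (i0-1) (by omega) (le_refl _)
      obtain ⟨P', Q', ⟨hP', hQ'⟩, hbQ', hPQ'⟩ := hstep (i0-1) P Q (by omega) hPp hQp
      have hii : i0 - 1 + 1 = i0 := by omega
      rw [hii] at hP' hQ' hbQ'
      obtain ⟨hζ', hη'⟩ := hval i0 P' Q' hP' hQ'
      rw [Nat.sub_self] at hζ' hη' hbQ'
      have hA1 : -(M) < Yf 0 - Yf (j-i0) := by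
        have h := (hYb (j-i0)).2
        rw [hY0]; linarith
      have hA2 : Yf 0 - Yf (j-i0) < β + 1 := by
        have h := (hYb (j-i0)).1
        rw [hY0]; linarith
      have hB1 : -(1:ℝ) < Xf 0 - Xf (j-i0) := (hζbnd 0 (j-i0)).1
      have hB2 : Xf 0 - Xf (j-i0) < 1 := (hζbnd 0 (j-i0)).2
      have hPR' : (P':ℝ) = (Q:ℝ) - (a:ℝ)*(Q':ℝ) := by exact_mod_cast hPQ'
      have hη2 : Yf 0 - Yf (j-i0) = (Q:ℝ) - (Q':ℝ)*β := by
        rw [hη', hPR']; ring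
      have hζ2 : Xf 0 - Xf (j-i0) = (Q:ℝ) + (Q':ℝ)*(β - (a:ℝ)) := by
        rw [hζ', hPR']; ring
      have hΔ1 : d 0 - d (j-i0) ≤ a := by
        have h1 := hd0 (j-i0); have h2 := hda 0; omega
      have hΔ2 : -a ≤ d 0 - d (j-i0) := by
        have h1 := hd0 0; have h2 := hda (j-i0); omega
      rcases hgood with ⟨hP, hQ⟩ | ⟨hP, hQ⟩ | ⟨hP, hQ⟩ | ⟨hP, hQ⟩
      · -- (a+1, -1)
        have hz : 1 ≤ b*Q' := by rw [hbQ', hP]; omega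
        have h1 : 1 ≤ Q' := int_pos_of_mul hb rfl hz
        have hQ'R : (1:ℝ) ≤ (Q':ℝ) := by exact_mod_cast h1
        have hQR : (Q:ℝ) = -1 := by rw [hQ]; push_cast; ring
        rw [hQR] at hη2
        exact F7 hβ0 hMβ hQ'R hη2 hA1
      · -- (-(a+1), 1)
        have hz : b*Q' ≤ -1 := by rw [hbQ', hP]; omega
        have h1 : Q' ≤ -1 := int_neg_of_mul hb rfl hz
        have hQ'R : (Q':ℝ) ≤ -1 := by exact_mod_cast h1
        have hQR : (Q:ℝ) = 1 := by rw [hQ]; push_cast; ring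
        rw [hQR] at hη2
        exact F8 hβ0 hQ'R hη2 hA2
      · -- (-a, 1)
        have hz : b*Q' ≤ 0 := by rw [hbQ', hP]; omega
        have h1 : Q' ≤ 0 := int_nonpos_of_mul hb rfl hz
        have hQR : (Q:ℝ) = 1 := by rw [hQ]; push_cast; ring
        rcases (by omega : Q' = 0 ∨ Q' ≤ -1) with h2 | h2
        · have hQ'R : (Q':ℝ) = 0 := by rw [h2]; push_cast; ring
          rw [hQ'R, hQR] at hζ2
          rw [hζ2] at hB2
          linarith
        · have hQ'R : (Q':ℝ) ≤ -1 := by exact_mod_cast h2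
          rw [hQR] at hη2
          exact F8 hβ0 hQ'R hη2 hA2
      · -- (a, -1)
        have hz : 0 ≤ b*Q' := by rw [hbQ', hP]; omega
        have h1 : 0 ≤ Q' := int_nonneg_of_mul hb rfl hz
        have hQR : (Q:ℝ) = -1 := by rw [hQ]; push_cast; ring
        rcases (by omega : Q' = 0 ∨ 1 ≤ Q') with h2 | h2
        · have hQ'R : (Q':ℝ) = 0 := by rw [h2]; push_cast; ring
          rw [hQ'R, hQR] at hζ2
          rw [hζ2] at hB1
          linarith
        · have hQ'R : (1:ℝ) ≤ (Q':ℝ) := by exact_mod_cast h2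
          rw [hQR] at hη2
          exact F7 hβ0 hMβ hQ'R hη2 hA1
  -- conclude pure periodicity
  have hoij0 : o 0 = o j := by rw [← hi00]; exact hoij
  refine ⟨j, by omega, ?_⟩
  rw [hT j]
  show Xf j = (x:ℝ)
  rw [show Xf j = xv q β (o j) from rfl, ← hoij0]
  exact hX0

end GammaAux

set_option maxHeartbeats 1000000 in
/-- For a quadratic Pisot number `β = (a + √(a²+4b))/2` with `a ≥ b ≥ 1`,
`γ(β) ≥ max{0, 1 − (b−1)b β/(β² − b²)}`. -/
theorem gamma_lower_bound_quadratic (a b : ℤ) (hba : b ≤ a) (hb : 1 ≤ b)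
    (hsq : ¬ ∃ n : ℤ, n ^ 2 = a ^ 2 + 4 * b)
    (β : ℝ) (hβ : β = ((a : ℝ) + Real.sqrt ((a : ℝ) ^ 2 + 4 * (b : ℝ))) / 2) :
    gammaFn β b ≥ max 0 (1 - (((b : ℝ) - 1) * (b : ℝ) * β) / (β ^ 2 - (b : ℝ) ^ 2)) := by
  have hbR : (1:ℝ) ≤ (b:ℝ) := by exact_mod_cast hb
  have habR : (b:ℝ) ≤ (a:ℝ) := by exact_mod_cast hba
  have haR : (1:ℝ) ≤ (a:ℝ) := le_trans hbR habR
  have harg : (0:ℝ) ≤ (a:ℝ)^2 + 4*(b:ℝ) := by nlinarith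
  have hs0 : 0 ≤ Real.sqrt ((a:ℝ)^2+4*(b:ℝ)) := Real.sqrt_nonneg _
  have hs2 : (Real.sqrt ((a:ℝ)^2+4*(b:ℝ)))^2 = (a:ℝ)^2+4*(b:ℝ) := Real.sq_sqrt harg
  have hβ2 : β^2 = a*β + b := by rw [hβ]; linear_combination hs2/4
  have hsgta : (a:ℝ) < Real.sqrt ((a:ℝ)^2+4*(b:ℝ)) := by nlinarith [hs2, hs0, hbR, haR]
  have hβa : (a:ℝ) < β := by rw [hβ]; linarith [hsgta]
  have hslt : Real.sqrt ((a:ℝ)^2+4*(b:ℝ)) < (a:ℝ)+2 := by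
    nlinarith [hs2, hs0, habR, haR]
  have hβa1 : β < (a:ℝ)+1 := by rw [hβ]; linarith [hslt]
  have hβb : (b:ℝ) < β := by linarith
  have hβ0 : 0 < β := by linarith
  have hden0 : 0 < β^2 - (b:ℝ)^2 := by nlinarith [hβb, hbR]
  have hD0 : 0 < 1-(β-(a:ℝ))^2 := by nlinarith [hβa, hβa1]
  have hT0 : 0 ≤ (((b:ℝ)-1)*(b:ℝ)*β)/(β^2-(b:ℝ)^2) :=
    div_nonneg (by nlinarith) hden0.le
  have hE1 : 1 - (((b:ℝ)-1)*(b:ℝ)*β)/(β^2-(b:ℝ)^2) ≤ 1 := by linarith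
  have key2 : ((b:ℝ)-1)*(b:ℝ)*β * (1-(β-(a:ℝ))^2)
      = ((a:ℝ) - β*(1-(β-(a:ℝ))^2)) * (β^2-(b:ℝ)^2) := by
    linear_combination (β - β^3 + (a:ℝ)*β^2 - (a:ℝ)*(b:ℝ)) * hβ2
  have hEX : 1 - (((b:ℝ)-1)*(b:ℝ)*β)/(β^2-(b:ℝ)^2)
      = -(a:ℝ)/(1-(β-(a:ℝ))^2) + β + 1 := by
    have hT : (((b:ℝ)-1)*(b:ℝ)*β)/(β^2-(b:ℝ)^2)
        = ((a:ℝ) - β*(1-(β-(a:ℝ))^2))/(1-(β-(a:ℝ))^2) := by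
      rw [div_eq_div_iff (ne_of_gt hden0) (ne_of_gt hD0)]
      exact key2
    rw [hT]
    field_simp
    ring
  set E : ℝ := 1 - (((b:ℝ)-1)*(b:ℝ)*β)/(β^2 - (b:ℝ)^2) with hE_def
  have hSbdd : BddAbove {r : ℝ | r ∈ Set.Icc (0:ℝ) 1 ∧ ZNb b ∩ Set.Ico 0 r ⊆ Pur β} :=
    ⟨1, fun r hr => hr.1.2⟩
  have h0S : (0:ℝ) ∈ {r : ℝ | r ∈ Set.Icc (0:ℝ) 1 ∧ ZNb b ∩ Set.Ico 0 r ⊆ Pur β} := by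
    constructor
    · exact ⟨le_refl 0, zero_le_one⟩
    · intro z hz
      rcases hz with ⟨_, hz2⟩
      rw [Set.Ico_self] at hz2
      exact hz2.elim
  have hγ : gammaFn β b = sSup {r : ℝ | r ∈ Set.Icc (0:ℝ) 1 ∧ ZNb b ∩ Set.Ico 0 r ⊆ Pur β} := rfl
  have h0γ : 0 ≤ gammaFn β b := by rw [hγ]; exact le_csSup hSbdd h0S
  rcases le_or_gt E 0 with hE0 | hE0
  · rw [ge_iff_le, max_le_iff]
    exact ⟨h0γ, le_trans hE0 h0γ⟩
  · have hES : E ∈ {r : ℝ | r ∈ Set.Icc (0:ℝ) 1 ∧ ZNb b ∩ Set.Ico 0 r ⊆ Pur β} := by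
      refine ⟨⟨hE0.le, hE1⟩, ?_⟩
      rintro z ⟨⟨r, hrz, hgcd⟩, hz0, hzE⟩
      have hx0 : 0 ≤ (r:ℝ) := by rw [hrz]; exact hz0
      have hxX : (r:ℝ) < -(a:ℝ)/(1-(β-(a:ℝ))^2) + β + 1 := by
        rw [hrz, ← hEX]; exact hzE
      obtain ⟨k, hk1, hk⟩ := GammaAux.key a b hb hba β hβ2 hβa hβa1 r hx0 hgcd hxX
      refine ⟨⟨hz0, lt_of_lt_of_le hzE hE1⟩, k, hk1, ?_⟩
      have hbb : betaT β = GammaAux.betaT' β := rfl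
      rw [hbb, ← hrz]
      exact hk
    rw [ge_iff_le, max_le_iff]
    refine ⟨h0γ, ?_⟩
    rw [hγ]
    exact le_csSup hSbdd hES
end
end

section
/- Let β be a nonzero algebraic integer, K = ℚ(β), and 𝓞 the ring of integers of K. Then there exists h ∈ ℕ such that every element of ℤ[β,β⁻¹] ∩ 𝓞 lies in β^{−h}·ℤ[β], i.e., ℤ[β,β⁻¹] ∩ 𝓞 ⊆ β^{−h}·ℤ[β]. -/
/-!
Every `x ∈ ℤ[β,β⁻¹]` satisfies `β ^ n * x ∈ ℤ[β]` for some `n`, so the integral elements of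
`ℤ[β,β⁻¹]` lie in the union of the increasing chain of `ℤ`-modules `𝓞 ∩ β^{-n}·ℤ[β]`. Since `𝓞` is
a noetherian `ℤ`-module, this chain stabilises at some `h`, which is the required exponent.
-/

theorem Submodule.exists_inf_le_of_monotone {R M : Type*} [Ring R] [AddCommGroup M] [Module R M]
    (N : Submodule R M) [IsNoetherian R N] {C : ℕ → Submodule R M} (hC : Monotone C) :
    ∃ h, ∀ n, N ⊓ C n ≤ C h := by
  let E : ℕ →o Submodule R N := ⟨fun n => (C n).comap N.subtype, fun _ _ hnm => comap_mono (hC hnm)⟩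
  obtain ⟨h, hE⟩ := monotone_stabilizes_iff_noetherian.mpr inferInstance E
  refine ⟨h, fun n x ⟨hxN, hxC⟩ => ?_⟩
  have hx : (⟨x, hxN⟩ : N) ∈ E (max n h) := E.monotone (le_max_left n h) hxC
  rwa [← hE _ (le_max_right n h)] at hx

theorem Subalgebra.monotone_comap_mulLeft_pow {R S : Type*} [CommRing R] [CommRing S] [Algebra R S]
    {A : Subalgebra R S} {β : S} (hβ : β ∈ A) :
    Monotone fun n : ℕ => (Subalgebra.toSubmodule A).comap (LinearMap.mulLeft R (β ^ n)) := by
  intro n m hnm x (hx : β ^ n * x ∈ A)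
  obtain ⟨k, rfl⟩ := Nat.exists_eq_add_of_le hnm
  show β ^ (n + k) * x ∈ A
  rw [pow_add, mul_right_comm]
  exact mul_mem hx (pow_mem hβ k)

theorem Algebra.exists_pow_mul_mem_adjoin_of_mem_adjoin_inv {R K : Type*} [CommRing R] [Field K]
    [Algebra R K] {β x : K} (hβ : β ≠ 0) (hx : x ∈ Algebra.adjoin R {β, β⁻¹}) :
    ∃ n : ℕ, β ^ n * x ∈ Algebra.adjoin R {β} := by
  have hβA : β ∈ Algebra.adjoin R {β} := Algebra.self_mem_adjoin_singleton R β
  induction hx using Algebra.adjoin_induction with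
  | mem y hy =>
    rcases hy with rfl | rfl
    · exact ⟨0, by simp [hβA]⟩
    · exact ⟨1, by simp [hβ, one_mem]⟩
  | algebraMap r => exact ⟨0, by simp⟩
  | add a b _ _ iha ihb =>
    obtain ⟨n, hn⟩ := iha
    obtain ⟨m, hm⟩ := ihb
    refine ⟨n + m, ?_⟩
    rw [show β ^ (n + m) * (a + b) = β ^ m * (β ^ n * a) + β ^ n * (β ^ m * b) by ring]
    exact add_mem (mul_mem (pow_mem hβA m) hn) (mul_mem (pow_mem hβA n) hm)
  | mul a b _ _ iha ihb =>
    obtain ⟨n, hn⟩ := iha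
    obtain ⟨m, hm⟩ := ihb
    refine ⟨n + m, ?_⟩
    rw [show β ^ (n + m) * (a * b) = (β ^ n * a) * (β ^ m * b) by ring]
    exact mul_mem hn hm

theorem zbeta_inv_inter_integers_subset_general (K : Type*) [Field K] [NumberField K]
    (β : K) (hβ0 : β ≠ 0) :
    ∃ h : ℕ, ∀ x : K, x ∈ Algebra.adjoin ℤ ({β, β⁻¹} : Set K) → IsIntegral ℤ x →
      ∃ z ∈ Algebra.adjoin ℤ ({β} : Set K), x = β ^ (-(h : ℤ)) * z := by
  have : IsNoetherian ℤ (Subalgebra.toSubmodule (integralClosure ℤ K)) :=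
    inferInstanceAs (IsNoetherian ℤ (NumberField.RingOfIntegers K))
  obtain ⟨h, hh⟩ := Submodule.exists_inf_le_of_monotone
    (Subalgebra.toSubmodule (integralClosure ℤ K))
    (Subalgebra.monotone_comap_mulLeft_pow (Algebra.self_mem_adjoin_singleton ℤ β))
  refine ⟨h, fun x hx hxint => ?_⟩
  obtain ⟨n, hn⟩ := Algebra.exists_pow_mul_mem_adjoin_of_mem_adjoin_inv hβ0 hx
  refine ⟨β ^ h * x, hh n ⟨hxint, hn⟩, ?_⟩
  rw [zpow_neg, zpow_natCast, inv_mul_cancel_left₀ (pow_ne_zero h hβ0)]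

/-- For a nonzero algebraic integer `β` generating the number field `K = ℚ(β)`,
there is `h ∈ ℕ` with `ℤ[β,β⁻¹] ∩ 𝓞 ⊆ β^{−h}·ℤ[β]`, where `𝓞` is the ring of
integers of `K` (membership in `𝓞` is `IsIntegral ℤ`). -/
theorem zbeta_inv_inter_integers_subset (K : Type*) [Field K] [NumberField K]
    (β : K) (hβ0 : β ≠ 0) (hβint : IsIntegral ℤ β)
    (hgen : IntermediateField.adjoin ℚ ({β} : Set K) = ⊤) :
    ∃ h : ℕ, ∀ x : K, x ∈ Algebra.adjoin ℤ ({β, β⁻¹} : Set K) → IsIntegral ℤ x →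
      ∃ z ∈ Algebra.adjoin ℤ ({β} : Set K), x = β ^ (-(h : ℤ)) * z :=
  zbeta_inv_inter_integers_subset_general K β hβ0
end

section
/- Let a, b be integers with a ≥ b ≥ 1, gcd(a,b) = 1, and a² + 4b not a perfect square, let β be a root of x² = ax + b, K = ℚ(β), and 𝓞 the ring of integers of K. Then every prime number p dividing b splits in K: there exist distinct prime ideals P ≠ Q of 𝓞 with p·𝓞 = P·Q. -/
/-!
With `β' = a - β` the conjugate root, `β β' = -b ≡ 0 (mod p)`, which suggests the factors
`P = (p, β)` and `Q = (p, β - a)`. Their product is `p · (p, β, β - a, b/p) = (p)`, since the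
last ideal contains `p` and `a`, which are coprime; for the same reason `P + Q = 1`. If `P = 1`,
i.e. `p` and `β` are coprime, then `p ∣ β(β - a) = b` gives `p ∣ β - a` in `𝓞`, and taking
traces `p ∣ Tr(β - a) = -a`, which is impossible; symmetrically `Q ≠ 1`. Finally
`N(P) N(Q) = N(p) = p²` forces `N(P) = N(Q) = p`.
-/

open NumberField Polynomial Module Ideal IntermediateField

theorem Polynomial.nextCoeff_X_sq_sub_C_mul_X_sub_C {R : Type*} [CommRing R] [Nontrivial R]
    (a b : R) : (X ^ 2 - C a * X - C b).nextCoeff = -a := by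
  rw [nextCoeff, show (X ^ 2 - C a * X - C b : R[X]).natDegree = 2 by compute_degree!]
  simp

theorem irreducible_X_sq_sub_C_mul_X_sub_C {F : Type*} [Field F] {a b : F}
    (h : ¬ IsSquare (a ^ 2 + 4 * b)) : Irreducible (X ^ 2 - C a * X - C b) := by
  have hdeg : (X ^ 2 - C a * X - C b).natDegree = 2 := by compute_degree!
  refine irreducible_of_degree_le_three_of_not_isRoot (by simp [hdeg]) fun q hq => h ?_
  refine ⟨2 * q - a, ?_⟩
  simp only [IsRoot, eval_sub, eval_mul, eval_pow, eval_X, eval_C] at hq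
  linear_combination -4 * hq

theorem minpoly.eq_X_sq_sub_C_mul_X_sub_C {F L : Type*} [Field F] [Field L] [Algebra F L]
    {a b : F} {x : L} (hx : x ^ 2 = algebraMap F L a * x + algebraMap F L b)
    (h : ¬ IsSquare (a ^ 2 + 4 * b)) : minpoly F x = X ^ 2 - C a * X - C b := by
  refine (minpoly.eq_of_irreducible_of_monic (irreducible_X_sq_sub_C_mul_X_sub_C h) ?_
    (by monicity!)).symm
  simp only [map_sub, map_mul, map_pow, aeval_X, aeval_C]
  linear_combination hx

theorem IsIntegral.of_sq_eq {R A : Type*} [CommRing R] [Ring A] [Algebra R A] {a b : R} {x : A}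
    (hx : x ^ 2 = algebraMap R A a * x + algebraMap R A b) : IsIntegral R x := by
  refine ⟨X ^ 2 - C a * X - C b, by monicity!, ?_⟩
  rw [← aeval_def, map_sub, map_sub, map_mul, map_pow, aeval_X, aeval_C, aeval_C, hx]
  abel

section PrimitiveElement

variable {F L : Type*} [Field F] [Field L] [Algebra F L] [FiniteDimensional F L] {x : L}

theorem finrank_eq_natDegree_minpoly_of_adjoin_simple_eq_top (hx : F⟮x⟯ = ⊤) :
    finrank F L = (minpoly F x).natDegree := by
  rw [← adjoin.finrank (.of_finite F x), hx, finrank_top']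

theorem trace_eq_neg_nextCoeff_minpoly_of_adjoin_simple_eq_top (hx : F⟮x⟯ = ⊤) :
    Algebra.trace F L x = -(minpoly F x).nextCoeff := by
  rw [trace_eq_finrank_mul_minpoly_nextCoeff, hx, IntermediateField.finrank_top, Nat.cast_one,
    one_mul]

end PrimitiveElement

namespace Ideal

section CommRing

variable {R : Type*} [CommRing R] {p a x c : R}

theorem span_pair_eq_top_iff {x y : R} : span {x, y} = ⊤ ↔ IsCoprime x y := by
  rw [eq_top_iff_one, mem_span_pair, IsCoprime]

theorem span_pair_ne_top_of_mul_eq {y : R} (hxy : x * y = p * c) (hy : ¬ p ∣ y) :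
    span {p, x} ≠ ⊤ := fun h =>
  hy ((span_pair_eq_top_iff.mp h).dvd_of_dvd_mul_left ⟨c, hxy⟩)

theorem span_pair_sup_span_pair_sub_eq_top (hpa : IsCoprime p a) :
    span {p, x} ⊔ span {p, x - a} = ⊤ := by
  obtain ⟨u, v, huv⟩ := hpa
  rw [eq_top_iff_one, Submodule.mem_sup]
  refine ⟨u * p + v * x, ?_, -v * (x - a), ?_, by linear_combination huv⟩
  · exact add_mem (mul_mem_left _ _ (subset_span (by simp)))
      (mul_mem_left _ _ (subset_span (by simp)))
  · exact mul_mem_left _ _ (subset_span (by simp))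

theorem span_pair_mul_span_pair_sub (hx : x * (x - a) = p * c) (hpa : IsCoprime p a) :
    span {p, x} * span {p, x - a} = span {p} := by
  obtain ⟨u, v, huv⟩ := hpa
  apply le_antisymm
  · simp only [span_pair_mul_span_pair, span_le, Set.insert_subset_iff,
      Set.singleton_subset_iff, SetLike.mem_coe, mem_span_singleton, hx]
    exact ⟨dvd_mul_right _ _, dvd_mul_right _ _, dvd_mul_left _ _, dvd_mul_right _ _⟩
  · have hp : p ∈ span {p, x} := subset_span (by simp)
    have hx : x ∈ span {p, x} := subset_span (by simp)
    have hp' : p ∈ span {p, x - a} := subset_span (by simp)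
    have hxa : x - a ∈ span {p, x - a} := subset_span (by simp)
    have h := sub_mem (add_mem (mul_mem_left _ u (mul_mem_mul hp hp'))
      (mul_mem_left _ v (mul_mem_mul hx hp'))) (mul_mem_left _ v (mul_mem_mul hp hxa))
    rw [span_singleton_le_iff_mem]
    convert h using 1
    linear_combination (-p) * huv

end CommRing

theorem isPrime_and_isPrime_of_span_natCast_eq_mul {S : Type*} [CommRing S]
    [IsDedekindDomain S] [Module.Free ℤ S] [Module.Finite ℤ S] (hS : finrank ℤ S = 2) {p : ℕ}
    (hp : p.Prime)
    {I J : Ideal S} (h : span {(p : S)} = I * J) (hI : I ≠ ⊤) (hJ : J ≠ ⊤) :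
    I.IsPrime ∧ J.IsPrime := by
  have hIJ : absNorm I * absNorm J = p ^ 2 := by
    rw [← map_mul, ← h, absNorm_span_natCast, hS]
  obtain ⟨hNI, hNJ⟩ := (hp.mul_eq_prime_sq_iff (mt absNorm_eq_one_iff.mp hI)
    (mt absNorm_eq_one_iff.mp hJ)).mp hIJ
  exact ⟨isPrime_of_irreducible_absNorm (hNI ▸ hp.prime.irreducible),
    isPrime_of_irreducible_absNorm (hNJ ▸ hp.prime.irreducible)⟩

end Ideal

theorem Algebra.dvd_trace_of_algebraMap_dvd {R S : Type*} [CommRing R] [CommRing S] [Algebra R S]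
    {r : R} {s : S} (h : algebraMap R S r ∣ s) : r ∣ Algebra.trace R S s := by
  obtain ⟨t, rfl⟩ := h
  rw [← Algebra.smul_def, map_smul, smul_eq_mul]
  exact dvd_mul_right _ _

theorem exists_isPrime_ne_mul_eq_span_of_sq_eq {K : Type*} [Field K] [NumberField K] {a b : ℤ}
    {x : 𝓞 K} (hx : x ^ 2 = a * x + b) (hrank : finrank ℚ K = 2)
    (htr : Algebra.trace ℚ K x = a) {p : ℕ} (hp : p.Prime) (hpb : (p : ℤ) ∣ b)
    (hpa : ¬ (p : ℤ) ∣ a) :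
    ∃ P Q : Ideal (𝓞 K), P ≠ Q ∧ P.IsPrime ∧ Q.IsPrime ∧ span {(p : 𝓞 K)} = P * Q := by
  obtain ⟨c, rfl⟩ := hpb
  have hrankℤ : finrank ℤ (𝓞 K) = 2 := (RingOfIntegers.rank K).trans hrank
  have htrℤ : Algebra.trace ℤ (𝓞 K) x = a := by exact_mod_cast (Algebra.coe_trace_int x).trans htr
  have htr_int : Algebra.trace ℤ (𝓞 K) a = 2 * a := by
    rw [← eq_intCast (algebraMap ℤ (𝓞 K)), Algebra.trace_algebraMap, hrankℤ, nsmul_eq_mul,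
      Nat.cast_ofNat]
  have hcop : IsCoprime (p : 𝓞 K) a := by
    simpa using (((Nat.prime_iff_prime_int.mp hp).coprime_iff_not_dvd).mpr hpa).intCast
  have hdvd_trace {y : 𝓞 K} (h : (p : 𝓞 K) ∣ y) : (p : ℤ) ∣ Algebra.trace ℤ (𝓞 K) y :=
    Algebra.dvd_trace_of_algebraMap_dvd (by simpa using h)
  have hx_ndvd : ¬ (p : 𝓞 K) ∣ x := fun h => hpa (htrℤ ▸ hdvd_trace h)
  have hxa_ndvd : ¬ (p : 𝓞 K) ∣ x - a := fun h => hpa <| by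
    have := hdvd_trace h
    rwa [map_sub, htrℤ, htr_int, show a - 2 * a = -a by ring, dvd_neg] at this
  have hmul : x * (x - a) = p * c := by push_cast at hx; linear_combination hx
  have hP := span_pair_ne_top_of_mul_eq hmul hxa_ndvd
  have hQ := span_pair_ne_top_of_mul_eq ((mul_comm _ _).trans hmul) hx_ndvd
  have hPQ := (span_pair_mul_span_pair_sub hmul hcop).symm
  obtain ⟨hPp, hQp⟩ := isPrime_and_isPrime_of_span_natCast_eq_mul hrankℤ hp hPQ hP hQ
  refine ⟨_, _, fun h => hP ?_, hPp, hQp, hPQ⟩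
  rw [← span_pair_sup_span_pair_sub_eq_top (x := x) hcop, ← h, sup_idem]

theorem prime_dividing_b_splits_general (a b : ℤ)
    (hgcd : Int.gcd a b = 1) (hsq : ¬ ∃ n : ℤ, n ^ 2 = a ^ 2 + 4 * b)
    (K : Type*) [Field K] [NumberField K] (β : K)
    (hroot : β ^ 2 = (a : K) * β + (b : K))
    (hgen : IntermediateField.adjoin ℚ ({β} : Set K) = ⊤) :
    ∀ p : ℕ, p.Prime → (p : ℤ) ∣ b →
      ∃ P Q : Ideal (𝓞 K), P ≠ Q ∧ P.IsPrime ∧ Q.IsPrime ∧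
        Ideal.span ({(p : 𝓞 K)} : Set (𝓞 K)) = P * Q := by
  intro p hp hpb
  have hdisc : ¬ IsSquare ((a : ℚ) ^ 2 + 4 * b) := by
    rw [show (a : ℚ) ^ 2 + 4 * b = ((a ^ 2 + 4 * b : ℤ) : ℚ) by push_cast; ring,
      Rat.isSquare_intCast_iff]
    rintro ⟨n, hn⟩
    exact hsq ⟨n, by rw [hn]; ring⟩
  have hmin := minpoly.eq_X_sq_sub_C_mul_X_sub_C (x := β) (by simpa using hroot) hdisc
  have hrank : finrank ℚ K = 2 := by
    rw [finrank_eq_natDegree_minpoly_of_adjoin_simple_eq_top hgen, hmin]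
    compute_degree!
  have htr : Algebra.trace ℚ K β = a := by
    rw [trace_eq_neg_nextCoeff_minpoly_of_adjoin_simple_eq_top hgen, hmin,
      nextCoeff_X_sq_sub_C_mul_X_sub_C, neg_neg]
  have hpa : ¬ (p : ℤ) ∣ a := fun hpa =>
    hp.one_lt.ne' (Nat.dvd_one.mp (hgcd ▸ Int.dvd_gcd hpa hpb))
  have hβ : IsIntegral ℤ β := .of_sq_eq (by simpa using hroot)
  exact exists_isPrime_ne_mul_eq_span_of_sq_eq (x := ⟨β, hβ⟩)
    (RingOfIntegers.ext (by push_cast; exact hroot)) hrank htr hp hpb hpa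

/-- Let `a ≥ b ≥ 1` with `gcd(a,b) = 1` and `a² + 4b` not a perfect square, and let
`β` be a root of `x² = ax + b` generating the (real quadratic) number field
`K = ℚ(β)`. Then every prime `p ∣ b` splits in `K`: `p𝓞 = P·Q` with `P ≠ Q` prime. -/
theorem prime_dividing_b_splits (a b : ℤ) (hba : b ≤ a) (hb : 1 ≤ b)
    (hgcd : Int.gcd a b = 1) (hsq : ¬ ∃ n : ℤ, n ^ 2 = a ^ 2 + 4 * b)
    (K : Type*) [Field K] [NumberField K] (β : K)
    (hroot : β ^ 2 = (a : K) * β + (b : K))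
    (hgen : IntermediateField.adjoin ℚ ({β} : Set K) = ⊤) :
    ∀ p : ℕ, p.Prime → (p : ℤ) ∣ b →
      ∃ P Q : Ideal (𝓞 K), P ≠ Q ∧ P.IsPrime ∧ Q.IsPrime ∧
        Ideal.span ({(p : 𝓞 K)} : Set (𝓞 K)) = P * Q :=
  prime_dividing_b_splits_general a b hgcd hsq K β hroot hgen
end

section
/- Let β be a Pisot number. For every y ∈ ℤ[β] ∩ [0,1) there exists x ∈ ℤ[β] ∩ [0,1) with T(x) = y, where T is the β-transformation. -/
/-!
If `p` is the minimal polynomial of `β` over `ℤ` and `a = p(0)`, then `a ∈ β ℤ[β]`, and every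
`y ∈ ℤ[β]` is congruent modulo `β ℤ[β]` to an integer. Hence `y + d ∈ β ℤ[β]` for the residue
`0 ≤ d < |a|` in a suitable class modulo `a`. Since `|a|` is the absolute value of the norm of `β`,
the Pisot condition gives `|a| ≤ β`, so `x = (y + d) / β` lies in `ℤ[β] ∩ [0,1)` and `T x = y`.
-/

noncomputable section

open IntermediateField

/-- A Pisot number: a real algebraic integer `β > 1` such that every ring embedding
`σ : ℚ(β) → ℂ` with `σ(β) ≠ β` satisfies `|σ(β)| < 1`. -/
def IsPisot (β : ℝ) : Prop :=
  1 < β ∧ IsIntegral ℤ β ∧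
    ∀ σ : ℚ⟮β⟯ →+* ℂ, σ (AdjoinSimple.gen ℚ β) ≠ (β : ℂ) →
      ‖σ (AdjoinSimple.gen ℚ β)‖ < 1

open Polynomial

theorem exists_mem_adjoin_mul_eq_add_algebraMap {R A : Type*} [CommRing R] [CommRing A]
    [Algebra R A] {β : A} {p : R[X]} (hp : aeval β p = 0) {y : A}
    (hy : y ∈ Algebra.adjoin R {β}) :
    ∃ c : R, ∀ d : R, p.coeff 0 ∣ c - d →
      ∃ x ∈ Algebra.adjoin R {β}, β * x = y + algebraMap R A d := by
  have aeval_eq (q : R[X]) : aeval β q = β * aeval β q.divX + algebraMap R A (q.coeff 0) := by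
    conv_lhs => rw [← q.X_mul_divX_add, map_add, map_mul, aeval_X, aeval_C]
  have aeval_mem (q : R[X]) : aeval β q ∈ Algebra.adjoin R {β} := by
    rw [Algebra.adjoin_singleton_eq_range_aeval]
    exact ⟨q, rfl⟩
  rw [Algebra.adjoin_singleton_eq_range_aeval] at hy
  obtain ⟨q, rfl⟩ := (AlgHom.mem_range _).1 hy
  refine ⟨-q.coeff 0, fun d ⟨s, hs⟩ => ⟨aeval β (q.divX + C s * p.divX), aeval_mem _, ?_⟩⟩
  have hd : algebraMap R A d =
      -algebraMap R A (q.coeff 0) - algebraMap R A (p.coeff 0) * algebraMap R A s := by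
    rw [← map_mul, ← hs, map_sub, map_neg]
    ring
  rw [aeval_eq p] at hp
  rw [aeval_eq q, hd, map_add, map_mul, aeval_C]
  linear_combination (algebraMap R A s) * hp

theorem norm_algebraMap_norm_le_of_forall_ne {F K E : Type*} [Field F] [Field K]
    [NormedField E] [Algebra F K] [Algebra F E] [FiniteDimensional F K] [Algebra.IsSeparable F K]
    [IsAlgClosed E] (x : K) (σ₀ : K →ₐ[F] E) (h : ∀ σ : K →ₐ[F] E, σ ≠ σ₀ → ‖σ x‖ ≤ 1) :
    ‖algebraMap F E (Algebra.norm F x)‖ ≤ ‖σ₀ x‖ := by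
  classical
  rw [Algebra.norm_eq_prod_embeddings, norm_prod,
    ← Finset.mul_prod_erase Finset.univ _ (Finset.mem_univ σ₀)]
  exact mul_le_of_le_one_right (norm_nonneg _)
    (Finset.prod_le_one (fun _ _ => norm_nonneg _) fun σ hσ => h σ (Finset.ne_of_mem_erase hσ))

theorem minpoly.coeff_field_fractions {R : Type*} (K : Type*) {S : Type*} [CommRing R]
    [IsDomain R] [IsIntegrallyClosed R] [Field K] [Algebra R K] [IsFractionRing R K] [CommRing S]
    [IsDomain S] [Algebra R S] [Algebra K S] [IsScalarTower R K S] {s : S} (hs : IsIntegral R s)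
    (n : ℕ) :
    (minpoly K s).coeff n = algebraMap R K ((minpoly R s).coeff n) := by
  rw [minpoly.isIntegrallyClosed_eq_field_fractions' K hs, coeff_map]

namespace IsPisot

variable {β : ℝ} (hβ : IsPisot β)
include hβ

theorem coeff_zero_minpoly_ne_zero : (minpoly ℤ β).coeff 0 ≠ 0 := by
  have h := minpoly.coeff_zero_ne_zero (hβ.2.1.tower_top (A := ℚ)) (one_pos.trans hβ.1).ne'
  rw [minpoly.coeff_field_fractions ℚ hβ.2.1, eq_intCast] at h
  exact_mod_cast h

theorem abs_coeff_zero_minpoly_le : |((minpoly ℤ β).coeff 0 : ℝ)| ≤ β := by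
  obtain ⟨hβ1, hint, hconj⟩ := hβ
  have hQ : IsIntegral ℚ β := hint.tower_top
  have : FiniteDimensional ℚ ℚ⟮β⟯ := adjoin.finiteDimensional hQ
  let σ₀ : ℚ⟮β⟯ →ₐ[ℚ] ℂ := (Complex.ofRealHom.comp (algebraMap ℚ⟮β⟯ ℝ)).toRatAlgHom
  have hσ₀ : σ₀ (AdjoinSimple.gen ℚ β) = β := by
    simp [σ₀]
  have hnorm : Algebra.norm ℚ (AdjoinSimple.gen ℚ β) =
      (-1) ^ (adjoin.powerBasis hQ).dim * ((minpoly ℤ β).coeff 0 : ℚ) := by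
    have h := Algebra.PowerBasis.norm_gen_eq_coeff_zero_minpoly (adjoin.powerBasis hQ)
    rw [adjoin.powerBasis_gen hQ, minpoly_gen, minpoly.coeff_field_fractions ℚ hint,
      eq_intCast] at h
    exact h
  have hconj' : ∀ σ : ℚ⟮β⟯ →ₐ[ℚ] ℂ, σ ≠ σ₀ → ‖σ (AdjoinSimple.gen ℚ β)‖ ≤ 1 :=
    fun σ hσ => (hconj σ.toRingHom fun h => hσ <| adjoin_algHom_ext ℚ <| by
      rintro _ rfl
      exact h.trans hσ₀.symm).le
  have hle := norm_algebraMap_norm_le_of_forall_ne _ σ₀ hconj'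
  rw [hσ₀, hnorm] at hle
  simpa [abs_of_pos (one_pos.trans hβ1)] using hle

end IsPisot

/-- For a Pisot number `β`, every `y ∈ ℤ[β] ∩ [0,1)` has a preimage under the
β-transformation lying in `ℤ[β] ∩ [0,1)`. -/
theorem exists_zbeta_preimage_of_betaT (β : ℝ) (hβ : IsPisot β) :
    ∀ y ∈ (Algebra.adjoin ℤ ({β} : Set ℝ) : Set ℝ) ∩ Set.Ico (0 : ℝ) 1,
      ∃ x ∈ (Algebra.adjoin ℤ ({β} : Set ℝ) : Set ℝ) ∩ Set.Ico (0 : ℝ) 1,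
        betaT β x = y := by
  rintro y ⟨hy, hy0, hy1⟩
  set a := (minpoly ℤ β).coeff 0
  have ha : a ≠ 0 := hβ.coeff_zero_minpoly_ne_zero
  obtain ⟨c, hc⟩ := exists_mem_adjoin_mul_eq_add_algebraMap (minpoly.aeval ℤ β) hy
  set d := c % a
  obtain ⟨x, hx, hβx⟩ := hc d (Int.mod_modEq c a).dvd
  rw [eq_intCast] at hβx
  have hd0 : (0 : ℝ) ≤ d := by exact_mod_cast Int.emod_nonneg c ha
  have hda : (d : ℝ) + 1 ≤ |(a : ℝ)| := by exact_mod_cast Int.emod_lt_abs c ha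
  have hβ0 : 0 < β := one_pos.trans hβ.1
  have hβa := hβ.abs_coeff_zero_minpoly_le
  refine ⟨x, ⟨hx, ?_, ?_⟩, ?_⟩
  · exact (mul_nonneg_iff_of_pos_left hβ0).1 (by linarith)
  · exact (mul_lt_iff_lt_one_right hβ0).1 (by linarith)
  · rw [betaT, hβx, Int.fract_add_intCast, Int.fract_eq_self.2 ⟨hy0, hy1⟩]
end
end

section
/- Let β be a nonzero algebraic integer with K = ℚ(β), and let N(β) denote the field norm of β from K to ℚ (a nonzero integer). Then {0, 1, …, |N(β)|−1} is a complete residue system of ℤ[β] modulo β·ℤ[β]: for every z ∈ ℤ[β] there exists exactly one integer r with 0 ≤ r < |N(β)| and z − r ∈ β·ℤ[β]. -/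
/-!
Every element `f(β)` of `ℤ[β]` is congruent to its constant term `f(0)` modulo `β·ℤ[β]`, so it
suffices to know which integers lie in `β·ℤ[β]`. If `m = β g(β)`, the minimal polynomial `p` of
`β` over `ℤ` divides `X g - m`, so its constant term `p(0)` divides `m`; conversely
`p(0) = -β (p.divX)(β) ∈ β·ℤ[β]`. Hence the integers in `β·ℤ[β]` are the multiples of `p(0)`,
and `|p(0)| = |N(β)|` because `β` generates `K`.
-/

open Polynomial

section MulAdjoinSingleton

variable (R : Type*) {S : Type*} [CommRing R] [CommRing S] [Algebra R S]

/-- `x·R[x]`, as an `R`-submodule of `S`. -/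
def mulAdjoinSingleton (x : S) : Submodule R S :=
  (Algebra.adjoin R {x}).toSubmodule.map (LinearMap.mulLeft R x)

variable {R}

theorem mem_mulAdjoinSingleton {x z : S} :
    z ∈ mulAdjoinSingleton R x ↔ ∃ w ∈ Algebra.adjoin R {x}, z = x * w := by
  simp only [mulAdjoinSingleton, Submodule.mem_map, Subalgebra.mem_toSubmodule,
    LinearMap.mulLeft_apply, eq_comm]

theorem aeval_sub_algebraMap_coeff_zero_mem_mulAdjoinSingleton (x : S) (f : R[X]) :
    aeval x f - algebraMap R S (f.coeff 0) ∈ mulAdjoinSingleton R x := by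
  refine mem_mulAdjoinSingleton.mpr ⟨aeval x f.divX, aeval_mem_adjoin_singleton R x, ?_⟩
  have h := congrArg (aeval x) (X_mul_divX_add f)
  simp only [map_add, map_mul, aeval_X, aeval_C] at h
  rw [← h]
  ring

theorem exists_sub_algebraMap_mem_mulAdjoinSingleton {x z : S} (hz : z ∈ Algebra.adjoin R {x}) :
    ∃ c : R, z - algebraMap R S c ∈ mulAdjoinSingleton R x := by
  obtain ⟨f, rfl⟩ := (Algebra.adjoin_singleton_eq_range_aeval R x ▸ hz : z ∈ (aeval x).range)
  exact ⟨f.coeff 0, aeval_sub_algebraMap_coeff_zero_mem_mulAdjoinSingleton x f⟩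

theorem algebraMap_coeff_zero_minpoly_mem_mulAdjoinSingleton (x : S) :
    algebraMap R S ((minpoly R x).coeff 0) ∈ mulAdjoinSingleton R x := by
  simpa using neg_mem (aeval_sub_algebraMap_coeff_zero_mem_mulAdjoinSingleton x (minpoly R x))

theorem algebraMap_mem_mulAdjoinSingleton_iff [IsDomain R] [IsIntegrallyClosed R] [IsDomain S]
    [Module.IsTorsionFree R S] {x : S} (hx : IsIntegral R x) (m : R) :
    algebraMap R S m ∈ mulAdjoinSingleton R x ↔ (minpoly R x).coeff 0 ∣ m := by
  constructor
  · intro hm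
    obtain ⟨w, hw, hmw⟩ := mem_mulAdjoinSingleton.mp hm
    obtain ⟨g, rfl⟩ := (Algebra.adjoin_singleton_eq_range_aeval R x ▸ hw : w ∈ (aeval x).range)
    have hroot : aeval x (X * g - C m) = 0 := by simp [hmw]
    obtain ⟨h, hh⟩ := minpoly.isIntegrallyClosed_dvd hx hroot
    refine ⟨-h.coeff 0, ?_⟩
    have := congrArg (coeff · 0) hh
    simp only [coeff_sub, mul_coeff_zero, coeff_X_zero, zero_mul, coeff_C_zero] at this
    linear_combination -this
  · rintro ⟨k, rfl⟩
    rw [map_mul, mul_comm, ← Algebra.smul_def]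
    exact Submodule.smul_mem _ k (algebraMap_coeff_zero_minpoly_mem_mulAdjoinSingleton x)

end MulAdjoinSingleton

theorem existsUnique_intCast_sub_mem {S : Type*} [AddCommGroupWithOne S] (I : AddSubgroup S)
    {A : ℤ} (hA : A ≠ 0) (hI : ∀ m : ℤ, (m : S) ∈ I ↔ A ∣ m) {z : S} {c : ℤ} (hz : z - c ∈ I) :
    ∃! r : ℤ, 0 ≤ r ∧ r < |A| ∧ z - r ∈ I := by
  have hA' : 0 < |A| := abs_pos.mpr hA
  set r₀ := c % |A|
  have hr₀0 : 0 ≤ r₀ := Int.emod_nonneg c hA'.ne'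
  have hr₀A : r₀ < |A| := Int.emod_lt_of_pos c hA'
  have hr₀ : z - r₀ ∈ I := by
    have hdvd : A ∣ c - r₀ := (abs_dvd A _).mp (Int.mod_modEq c |A|).dvd
    convert I.add_mem hz ((hI _).mpr hdvd) using 1
    push_cast; abel
  refine ⟨r₀, ⟨hr₀0, hr₀A, hr₀⟩, ?_⟩
  rintro r ⟨hr0, hrA, hr⟩
  have hd : |A| ∣ r₀ - r := (abs_dvd A _).mpr <| (hI _).mp <| by
    convert I.sub_mem hr hr₀ using 1
    push_cast; abel
  have := Int.eq_zero_of_abs_lt_dvd hd (abs_sub_lt_iff.mpr ⟨by omega, by omega⟩)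
  omega

theorem abs_norm_eq_abs_coeff_zero_minpoly {K L : Type*} [Field K] [LinearOrder K]
    [IsStrictOrderedRing K] [Field L] [Algebra K L] {x : L} (hx : IsIntegral K x)
    (hgen : IntermediateField.adjoin K {x} = ⊤) :
    |Algebra.norm K x| = |(minpoly K x).coeff 0| := by
  let pb : PowerBasis K L := (IntermediateField.adjoin.powerBasis hx).map
    ((IntermediateField.equivOfEq hgen).trans IntermediateField.topEquiv)
  have := Algebra.PowerBasis.norm_gen_eq_coeff_zero_minpoly pb
  change Algebra.norm K x = _ * (minpoly K x).coeff 0 at this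
  rw [this, abs_mul, abs_pow, abs_neg, abs_one, one_pow, one_mul]

/-- For a nonzero algebraic integer `β` generating the number field `K = ℚ(β)`,
the set `{0, 1, …, |N(β)|−1}` is a complete residue system of `ℤ[β]` modulo
`β·ℤ[β]`: every `z ∈ ℤ[β]` is congruent to exactly one integer `r` with
`0 ≤ r < |N(β)|`, where `N(β) = Algebra.norm ℚ β`. -/
theorem residue_system_mod_beta (K : Type*) [Field K] [NumberField K]
    (β : K) (hβ0 : β ≠ 0) (hβint : IsIntegral ℤ β)
    (hgen : IntermediateField.adjoin ℚ ({β} : Set K) = ⊤) :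
    ∀ z ∈ Algebra.adjoin ℤ ({β} : Set K),
      ∃! r : ℤ, 0 ≤ r ∧ (r : ℚ) < |Algebra.norm ℚ β| ∧
        ∃ w ∈ Algebra.adjoin ℤ ({β} : Set K), z - (r : K) = β * w := by
  have hβQ : IsIntegral ℚ β := Algebra.IsIntegral.isIntegral β
  have hcoeff : (minpoly ℚ β).coeff 0 = (minpoly ℤ β).coeff 0 := by
    rw [minpoly.isIntegrallyClosed_eq_field_fractions' ℚ hβint, coeff_map, eq_intCast]
  have hA : (minpoly ℤ β).coeff 0 ≠ 0 := by
    exact_mod_cast hcoeff ▸ minpoly.coeff_zero_ne_zero hβQ hβ0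
  have hnorm : |Algebra.norm ℚ β| = (|(minpoly ℤ β).coeff 0| : ℤ) := by
    rw [abs_norm_eq_abs_coeff_zero_minpoly hβQ hgen, hcoeff, Int.cast_abs]
  intro z hz
  obtain ⟨c, hc⟩ := exists_sub_algebraMap_mem_mulAdjoinSingleton hz
  have key := existsUnique_intCast_sub_mem (mulAdjoinSingleton ℤ β).toAddSubgroup hA
    (fun m => by simpa using algebraMap_mem_mulAdjoinSingleton_iff hβint m) (by simpa using hc)
  simpa only [hnorm, Int.cast_lt, Submodule.mem_toAddSubgroup, mem_mulAdjoinSingleton] using key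
end

section
/- Let β > 1 be a real number and T the β-transformation. For all x, y ∈ [0,1) with y ≤ x, for every k ∈ ℕ and every z ∈ [0,1) with T^k(z) = x, there exists w ∈ [0,1) with T^k(w) = y and β^k·w − y = β^k·z − x. (Equivalently, β^k·T^{−k}(x) − x ⊆ β^k·T^{−k}(y) − y as subsets of ℝ.) -/
noncomputable section

/-- For `β > 1` and `y ≤ x` in `[0,1)`: `β^k·T^{−k}(x) − x ⊆ β^k·T^{−k}(y) − y`,
i.e. every `z ∈ [0,1)` with `T^k(z) = x` yields `w ∈ [0,1)` with `T^k(w) = y` and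
`β^k·w − y = β^k·z − x`. -/
theorem preimage_translate_subset_of_le (β : ℝ) (hβ : 1 < β)
    (x y : ℝ) (hx : x ∈ Set.Ico (0 : ℝ) 1) (hy : y ∈ Set.Ico (0 : ℝ) 1) (hyx : y ≤ x)
    (k : ℕ) (z : ℝ) (hz : z ∈ Set.Ico (0 : ℝ) 1) (hzx : (betaT β)^[k] z = x) :
    ∃ w ∈ Set.Ico (0 : ℝ) 1, (betaT β)^[k] w = y ∧ β ^ k * w - y = β ^ k * z - x := by
  have hβ0 : (0:ℝ) < β := lt_trans one_pos hβ
  induction k generalizing z with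
  | zero =>
    simp only [Function.iterate_zero, id_eq] at hzx
    subst hzx
    exact ⟨y, hy, rfl, by ring⟩
  | succ k ih =>
    rw [Function.iterate_succ_apply] at hzx
    have hTz : betaT β z ∈ Set.Ico (0:ℝ) 1 := ⟨Int.fract_nonneg _, Int.fract_lt_one _⟩
    obtain ⟨w', hw', hw'y, hw'eq⟩ := ih (betaT β z) hTz hzx
    set n : ℤ := ⌊β * z⌋ with hn
    have hfract : betaT β z = β * z - n := by
      rfl
    have hn0 : (0:ℝ) ≤ (n:ℝ) := by
      have : (0:ℤ) ≤ n := Int.floor_nonneg.mpr (mul_nonneg hβ0.le hz.1)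
      exact_mod_cast this
    have hpk : (0:ℝ) < β ^ k := pow_pos hβ0 k
    -- key algebraic identity
    have hkey : β ^ k * (w' + n) = β ^ (k+1) * z - x + y := by
      have : β ^ k * w' = β ^ k * (β * z - n) - x + y := by
        rw [← hfract]; linarith [hw'eq]
      rw [pow_succ]; nlinarith [this]
    have hwlt : w' + (n:ℝ) < β := by
      have h1 : β ^ k * (w' + n) < β ^ (k+1) := by
        have : β ^ (k+1) * z < β ^ (k+1) := by
          have := pow_pos hβ0 (k+1)
          nlinarith [hz.2]
        linarith [hkey, hyx]
      rw [pow_succ] at h1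
      nlinarith [h1]
    refine ⟨(w' + n) / β, ⟨div_nonneg (by linarith [hw'.1]) hβ0.le,
      (div_lt_one hβ0).mpr hwlt⟩, ?_, ?_⟩
    · rw [Function.iterate_succ_apply]
      have hTw : betaT β ((w' + n) / β) = w' := by
        rw [betaT, mul_div_cancel₀ _ (ne_of_gt hβ0), Int.fract_add_intCast,
          Int.fract_eq_self.mpr ⟨hw'.1, hw'.2⟩]
      rw [hTw, hw'y]
    · have : β ^ (k+1) * ((w' + n) / β) = β ^ k * (w' + n) := by
        field_simp; ring
      rw [this, hkey]; ring
end
end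

section
/- Let β > 1 be a real number, T the β-transformation, and T̃ the quasi-greedy map. Let v, x ∈ [0,1) with v ≤ x, suppose that v = 0 or v = T̃^m(1) for some m ≥ 1, and suppose that T̃^m(1) ∉ (v, x] for all m ∈ ℕ. Then for every k ∈ ℕ and every w ∈ [0,1) with T^k(w) = v, there exists z ∈ [0,1) with T^k(z) = x and β^k·z − x = β^k·w − v. (Equivalently, β^k·T^{−k}(v) − v ⊆ β^k·T^{−k}(x) − x as subsets of ℝ.) -/
noncomputable section

/-- The quasi-greedy map `T̃(x) = βx − (⌈βx⌉ − 1)`; its iterates at `1` are the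
left limits `T^m(1⁻)`. -/
def quasiT (β : ℝ) (x : ℝ) : ℝ := β * x - ((⌈β * x⌉ : ℝ) - 1)

/-- For `β > 1`, `v ≤ x` in `[0,1)` with `v = 0` or `v = T̃^m(1)` for some `m ≥ 1`,
and no `T̃^m(1)` lying in `(v, x]`: `β^k·T^{−k}(v) − v ⊆ β^k·T^{−k}(x) − x`. -/
theorem preimage_translate_subset_of_interval (β : ℝ) (hβ : 1 < β)
    (v x : ℝ) (hv : v ∈ Set.Ico (0 : ℝ) 1) (hx : x ∈ Set.Ico (0 : ℝ) 1) (hvx : v ≤ x)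
    (hvV : v = 0 ∨ ∃ m : ℕ, 1 ≤ m ∧ (quasiT β)^[m] 1 = v)
    (hgap : ∀ m : ℕ, (quasiT β)^[m] 1 ∉ Set.Ioc v x)
    (k : ℕ) (w : ℝ) (hw : w ∈ Set.Ico (0 : ℝ) 1) (hwv : (betaT β)^[k] w = v) :
    ∃ z ∈ Set.Ico (0 : ℝ) 1, (betaT β)^[k] z = x ∧ β ^ k * z - x = β ^ k * w - v := by
  obtain ⟨hv0, hv1⟩ := hv
  obtain ⟨hx0, hx1⟩ := hx
  obtain ⟨hw0, hw1⟩ := hw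
  have hβ0 : (0:ℝ) < β := lt_trans one_pos hβ
  set W : ℕ → ℝ := fun i => (betaT β)^[i] w with hWdef
  set U : ℕ → ℝ := fun l => (quasiT β)^[l] 1 with hUdef
  have hWstep : ∀ i, W (i+1) = Int.fract (β * W i) := by
    intro i
    show (betaT β)^[i+1] w = _
    rw [Function.iterate_succ_apply']
    rfl
  have hW0 : ∀ i, 0 ≤ W i := by
    intro i
    cases i with
    | zero => exact hw0
    | succ n => rw [hWstep]; exact Int.fract_nonneg _
  have hW1 : ∀ i, W i < 1 := by
    intro i
    cases i with
    | zero => exact hw1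
    | succ n => rw [hWstep]; exact Int.fract_lt_one _
  have hUstep : ∀ l, β * U l = ((⌈β * U l⌉ : ℝ) - 1) + U (l+1) := by
    intro l
    have : U (l+1) = quasiT β (U l) := by
      show (quasiT β)^[l+1] 1 = _
      rw [Function.iterate_succ_apply']
    rw [this, quasiT]; ring
  have hU : ∀ l, 0 < U l ∧ U l ≤ 1 := by
    intro l
    induction l with
    | zero => norm_num [hUdef]
    | succ n ih =>
      have h1 : (β * U n : ℝ) ≤ ⌈β * U n⌉ := Int.le_ceil _
      have h2 : ((⌈β * U n⌉ : ℤ) : ℝ) < β * U n + 1 := Int.ceil_lt_add_one _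
      have := hUstep n
      constructor <;> linarith
  have hwv' : W k = v := hwv
  have hW00 : W 0 = w := rfl
  clear_value W U
  -- key estimate
  have key : ∀ j : ℕ, ∀ i : ℕ, i + j = k → W i + (x - v) / β ^ j < 1 := by
    intro j
    induction j using Nat.strong_induction_on with
    | _ j IH =>
      intro i hij
      by_contra hcon
      push_neg at hcon
      rcases Nat.eq_zero_or_pos j with hj0 | hj0
      · subst hj0
        have hik : i = k := by omega
        have hWk : W i = v := by rw [hik]; exact hwv'
        rw [pow_zero, div_one, hWk] at hcon
        linarith
      set ε := 1 - W i with hεdef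
      clear_value ε
      have hε0 : 0 < ε := by have := hW1 i; linarith
      have hεle : ε * β ^ j ≤ x - v := by
        have : ε ≤ (x - v) / β ^ j := by linarith
        exact (le_div_iff₀ (pow_pos hβ0 j)).mp this
      have Q : ∀ l, l ≤ j → W (i + l) = U l - β ^ l * ε := by
        intro l
        induction l with
        | zero =>
          intro _
          have : U 0 = 1 := by norm_num [hUdef]
          simp [this, hεdef]
        | succ l IHl =>
          intro hl
          have hWl := IHl (by omega)
          have hiter : W (i + (l+1)) = Int.fract (((⌈β * U l⌉ - 1 : ℤ) : ℝ)
              + (U (l+1) - β ^ (l+1) * ε)) := by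
            have h1 : i + (l+1) = (i + l) + 1 := by omega
            rw [h1, hWstep, hWl]
            congr 1
            have := hUstep l
            have hp : β ^ (l+1) = β ^ l * β := pow_succ β l
            push_cast
            nlinarith [this, hp]
          rw [Int.fract_intCast_add] at hiter
          have hU1 := hU (l+1)
          have hpow0 : 0 < β ^ (l+1) * ε := mul_pos (pow_pos hβ0 (l+1)) hε0
          -- bound: β^(l+1) ε ≤ (x-v)/β^(j-(l+1))
          set d := j - (l+1) with hddef
          clear_value d
          have hd : (l+1) + d = j := by omega
          have hbound : β ^ (l+1) * ε ≤ (x - v) / β ^ d := by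
            rw [le_div_iff₀ (pow_pos hβ0 d)]
            calc β ^ (l+1) * ε * β ^ d = ε * β ^ j := by rw [← hd, pow_add]; ring
            _ ≤ x - v := hεle
          have hxv : x - v < 1 := by linarith
          have hd1 : 0 < β ^ d := pow_pos hβ0 d
          have hd2 : (x - v) / β ^ d ≤ x - v := by
            rw [div_le_iff₀ hd1]
            nlinarith [one_le_pow₀ hβ.le (n := d)]
          by_cases hr : 0 ≤ U (l+1) - β ^ (l+1) * ε
          · rw [Int.fract_eq_self.mpr ⟨hr, by linarith [hU1.2]⟩] at hiter
            exact hiter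
          · push_neg at hr
            exfalso
            have hfr : Int.fract (U (l+1) - β ^ (l+1) * ε)
                = U (l+1) - β ^ (l+1) * ε + 1 := by
              rw [← Int.fract_add_one]
              exact Int.fract_eq_self.mpr ⟨by linarith [hU1.1, hbound, hd2, hxv], by linarith⟩
            rw [hfr] at hiter
            have hIH := IH d (by omega) (i + (l+1)) (by omega)
            nlinarith [hU1.1, hiter, hbound, hIH]
      have hQj := Q j le_rfl
      rw [hij] at hQj
      rw [hwv'] at hQj
      have hUj : U j = v + β ^ j * ε := by linarith
      have hcomm : β ^ j * ε = ε * β ^ j := mul_comm _ _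
      have hposj : 0 < β ^ j * ε := mul_pos (pow_pos hβ0 j) hε0
      have hmem : U j ∈ Set.Ioc v x := by
        constructor
        · linarith
        · linarith
      rw [hUdef] at hmem
      exact hgap j hmem
  -- construct z
  have hβk : (0:ℝ) < β ^ k := pow_pos hβ0 k
  refine ⟨w + (x - v) / β ^ k, ⟨?_, ?_⟩, ?_, ?_⟩
  · have : 0 ≤ (x - v) / β ^ k := div_nonneg (by linarith) hβk.le
    linarith
  · have := key k 0 (by omega)
    simpa [hWdef] using this
  · have claim2 : ∀ i j, i + j = k →
        (betaT β)^[i] (w + (x - v) / β ^ k) = W i + (x - v) / β ^ j := by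
      intro i
      induction i with
      | zero =>
        intro j hj
        have : j = k := by omega
        subst this
        simp [hW00]
      | succ i IHi =>
        intro j hj
        have hIH := IHi (j+1) (by omega)
        rw [Function.iterate_succ_apply', hIH]
        show Int.fract (β * (W i + (x - v) / β ^ (j+1))) = _
        have h1 : β * (W i + (x - v) / β ^ (j+1))
            = ((⌊β * W i⌋ : ℤ) : ℝ) + (W (i+1) + (x - v) / β ^ j) := by
          have h2 : W (i+1) = β * W i - ⌊β * W i⌋ := by rw [hWstep]; rfl
          have h3 : β * ((x - v) / β ^ (j+1)) = (x - v) / β ^ j := by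
            rw [pow_succ']
            field_simp
          rw [h2]
          push_cast
          linarith [h3]
        rw [h1, Int.fract_intCast_add]
        refine Int.fract_eq_self.mpr ⟨?_, ?_⟩
        · have : 0 ≤ (x - v) / β ^ j := div_nonneg (by linarith) (pow_pos hβ0 j).le
          linarith [hW0 (i+1)]
        · exact key j (i+1) (by omega)
    have := claim2 k 0 (by omega)
    rw [this, pow_zero, div_one, hwv']
    ring
  · field_simp
    ring
end
end

section
/- Let β be a Pisot number, T the β-transformation, and P = {x ∈ ℤ[β] ∩ [0,1) : T^k(x) = x for some k ≥ 1}. Assume the weak finiteness property (W): for every x ∈ P there exist y ∈ [0, 1−x) and n ∈ ℕ with T^n(x+y) = 0 and T^n(y) = 0. Then for every x ∈ P and every ε > 0 there exist y ∈ [0, ε) with x + y < 1 and n ∈ ℕ such that T^n(x+y) = 0 and T^n(y) = 0. -/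
noncomputable section

open IntermediateField

/-- The set `P = Pur(β) ∩ ℤ[β]` of purely periodic points lying in `ℤ[β]`. -/
def purZbeta (β : ℝ) : Set ℝ :=
  {x | x ∈ Set.Ico (0 : ℝ) 1 ∧ x ∈ Algebra.adjoin ℤ ({β} : Set ℝ) ∧
    ∃ k : ℕ, 1 ≤ k ∧ (betaT β)^[k] x = x}

/-! Replace `x` by the largest point `x*` of its periodic orbit and apply (W) to `x*`,
getting `y*` with `x* + y* < 1`. As long as the orbit of `x` stays below `x*`, adding
`y = y* / β^s` to `x` does not cross an integer during the first `s` steps, so `T` acts on the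
perturbation by multiplication by `β`: with `s` chosen so that `T^s x = x*`, we get
`T^s (x + y) = x* + y*` and `T^s y = y*`, while `y` is as small as we like. -/

theorem Function.IsPeriodicPt.exists_iterate_le {α : Type*} [LinearOrder α] {f : α → α} {x : α}
    {k : ℕ} (hk : 0 < k) (h : Function.IsPeriodicPt f k x) :
    ∃ j, ∀ i, f^[i] x ≤ f^[j] x := by
  obtain ⟨j, -, hj⟩ := Finset.exists_max_image (Finset.range k) (fun i => f^[i] x)
    ⟨0, Finset.mem_range.mpr hk⟩
  refine ⟨j, fun i => ?_⟩
  rw [← h.iterate_mod_apply]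
  exact hj _ (Finset.mem_range.mpr (Nat.mod_lt _ hk))

theorem betaT_zero (β : ℝ) : betaT β 0 = 0 := by
  simp [betaT]

theorem mapsTo_betaT_Ico (β : ℝ) : Set.MapsTo (betaT β) (Set.Ico 0 1) (Set.Ico 0 1) :=
  fun _ _ => ⟨Int.fract_nonneg _, Int.fract_lt_one _⟩

theorem mapsTo_betaT_adjoin (β : ℝ) :
    Set.MapsTo (betaT β) (Algebra.adjoin ℤ ({β} : Set ℝ)) (Algebra.adjoin ℤ ({β} : Set ℝ)) :=
  fun _ hx => sub_mem (mul_mem (Algebra.subset_adjoin rfl) hx) (Subalgebra.intCast_mem _ _)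

theorem mapsTo_betaT_purZbeta (β : ℝ) : Set.MapsTo (betaT β) (purZbeta β) (purZbeta β) :=
  fun _ ⟨hIco, hadj, k, hk, hper⟩ =>
    ⟨mapsTo_betaT_Ico β hIco, mapsTo_betaT_adjoin β hadj, k, hk,
      Function.IsPeriodicPt.apply (f := betaT β) hper⟩

theorem betaT_iterate_add {β : ℝ} (hβ : 0 ≤ β) {z t : ℝ} (ht : 0 ≤ t) {N : ℕ}
    (h : ∀ j ≤ N, (betaT β)^[j] z + β ^ j * t < 1) :
    (betaT β)^[N] (z + t) = (betaT β)^[N] z + β ^ N * t := by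
  induction N with
  | zero => simp
  | succ N ih =>
    rw [Function.iterate_succ_apply', Function.iterate_succ_apply',
      ih fun j hj => h j (Nat.le_succ_of_le hj)]
    have hlt := h (N + 1) le_rfl
    rw [Function.iterate_succ_apply'] at hlt
    show Int.fract (β * _) = Int.fract (β * _) + _
    refine Int.fract_eq_iff.mpr
      ⟨add_nonneg (Int.fract_nonneg _) (by positivity), hlt, ⌊β * (betaT β)^[N] z⌋, ?_⟩
    rw [Int.fract, pow_succ]
    ring

theorem betaT_iterate_add_div_pow {β : ℝ} (hβ : 1 ≤ β) {z u : ℝ} (hu : 0 ≤ u) {s : ℕ}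
    (h : ∀ j ≤ s, (betaT β)^[j] z + u < 1) :
    (betaT β)^[s] (z + u / β ^ s) = (betaT β)^[s] z + u := by
  have hβs : 0 < β ^ s := by positivity
  rw [betaT_iterate_add (by linarith) (by positivity) fun j hj => ?_, mul_div_cancel₀ _ hβs.ne']
  calc (betaT β)^[j] z + β ^ j * (u / β ^ s)
      ≤ (betaT β)^[j] z + u := by
        gcongr
        rw [mul_div_assoc', div_le_iff₀ hβs, mul_comm u]
        exact mul_le_mul_of_nonneg_right (pow_le_pow_right₀ hβ hj) hu
    _ < 1 := h j hj

/-- If a Pisot number `β` satisfies the weak finiteness property (W), then for every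
`x ∈ P = Pur(β) ∩ ℤ[β]` and every `ε > 0` there are `y ∈ [0,ε)` with `x + y < 1`
and `n ∈ ℕ` with `T^n(x+y) = T^n(y) = 0`. -/
theorem weak_finiteness_small_y (β : ℝ) (hβ : IsPisot β)
    (hW : ∀ x ∈ purZbeta β, ∃ y : ℝ, 0 ≤ y ∧ y < 1 - x ∧
      ∃ n : ℕ, (betaT β)^[n] (x + y) = 0 ∧ (betaT β)^[n] y = 0) :
    ∀ x ∈ purZbeta β, ∀ ε > (0 : ℝ), ∃ y : ℝ, 0 ≤ y ∧ y < ε ∧ x + y < 1 ∧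
      ∃ n : ℕ, (betaT β)^[n] (x + y) = 0 ∧ (betaT β)^[n] y = 0 := by
  intro x hx ε hε
  have hβ1 := hβ.1
  obtain ⟨k, hk, hper⟩ := hx.2.2
  obtain ⟨j, hmax⟩ := Function.IsPeriodicPt.exists_iterate_le hk hper
  obtain ⟨ys, hys0, hys1, n, hsum, hys⟩ := hW _ ((mapsTo_betaT_purZbeta β).iterate j hx)
  have hxs0 : 0 ≤ (betaT β)^[j] x := ((mapsTo_betaT_Ico β).iterate j hx.1).1
  obtain ⟨m, hm⟩ := pow_unbounded_of_one_lt ε⁻¹ hβ1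
  set s := j + k * m
  have hs : (betaT β)^[s] x = (betaT β)^[j] x := by
    rw [Function.iterate_add_apply, (Function.IsPeriodicPt.mul_const hper m).eq]
  have hεβs : 1 < ε * β ^ s := by
    rw [inv_lt_iff_one_lt_mul₀' hε] at hm
    exact hm.trans_le <| by
      gcongr
      · exact hβ1.le
      · exact le_add_left (Nat.le_mul_of_pos_left m hk)
  have hβs : 1 ≤ β ^ s := one_le_pow₀ hβ1.le
  have hy_le : ys / β ^ s ≤ ys := div_le_self hys0 hβs
  have hx_sum : (betaT β)^[s] (x + ys / β ^ s) = (betaT β)^[j] x + ys := by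
    rw [betaT_iterate_add_div_pow (z := x) hβ1.le hys0 fun i _ => by linarith [hmax i], hs]
  have hy : (betaT β)^[s] (ys / β ^ s) = ys := by
    have h0 (i : ℕ) : (betaT β)^[i] 0 = 0 := Function.iterate_fixed (betaT_zero β) i
    simpa [h0] using betaT_iterate_add_div_pow (z := 0) hβ1.le hys0 fun i _ => by
      rw [h0]; linarith
  have hx_le : x ≤ (betaT β)^[j] x := hmax 0
  refine ⟨ys / β ^ s, by positivity, ?_, by linarith, n + s, ?_, ?_⟩
  · rw [div_lt_iff₀ (by positivity)]
    linarith
  · rw [Function.iterate_add_apply, hx_sum, hsum]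
  · rw [Function.iterate_add_apply, hy, hys]
end
end

section
/- Let β be a quadratic Pisot number, T the β-transformation, and σ : ℚ(β) → ℝ the ring embedding with σ(β) ≠ β. Let x, y ∈ ℤ[β] ∩ [0,1) with x ≠ y, and let x₁, y₁ ∈ ℤ[β] ∩ [0,1) with T(x₁) = x and T(y₁) = y. Then sign(σ(x₁) − σ(y₁)) = sign(σ(β)) · sign(σ(x) − σ(y)). -/
/-!
Write `γ = σ(β)`, so `β + γ` and `βγ` are integers. For `e = x - y` and `d = x₁ - y₁` we
have `β d = e + k` with `k ∈ ℤ`, hence `γ σ(d) = σ(e) + k`. Since `e ≠ 0` lies in `ℤ[β]`, its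
norm `e σ(e)` is a nonzero integer, and `|e| < 1` forces `|σ(e)| > 1`. If `γ σ(d)` and `σ(e)`
had opposite signs, say `σ(e) < -1 < 0 ≤ γ σ(d)`, then `w = β d = a + b β` would satisfy
`0 ≤ σ(w) < w`; this makes `b ≥ 1` and `a + b ≥ 1` (as `γ < 1`), so `w ≥ β`, contradicting
`|d| < 1`.
-/

noncomputable section

open IntermediateField

theorem Real.sign_mul (a b : ℝ) : Real.sign (a * b) = Real.sign a * Real.sign b := by
  rcases lt_trichotomy a 0 with ha | rfl | ha <;> rcases lt_trichotomy b 0 with hb | rfl | hb <;>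
    simp [Real.sign_of_neg, Real.sign_of_pos, *, mul_pos_of_neg_of_neg,
      mul_neg_of_neg_of_pos, mul_neg_of_pos_of_neg]

theorem IsIntegral.exists_sq_eq_intCast_mul_add {L : Type*} [Field L] [CharZero L] {x : L}
    (hx : IsIntegral ℤ x) (hdeg : Module.finrank ℚ ℚ⟮x⟯ = 2) :
    ∃ p q : ℤ, x ^ 2 = p * x + q := by
  have hmonic := minpoly.monic hx
  have hnatDeg : (minpoly ℤ x).natDegree = 2 := by
    rw [← hmonic.natDegree_map (algebraMap ℤ ℚ),
      ← minpoly.isIntegrallyClosed_eq_field_fractions' ℚ hx, ← adjoin.finrank hx.tower_top, hdeg]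
  refine ⟨-(minpoly ℤ x).coeff 1, -(minpoly ℤ x).coeff 0, ?_⟩
  have h := minpoly.aeval ℤ x
  rw [hmonic.as_sum, hnatDeg] at h
  simp [Finset.sum_range_succ] at h
  push_cast
  linear_combination h

theorem Algebra.exists_eq_intCast_add_mul_of_mem_adjoin {A : Type*} [CommRing A] {x r : A}
    {p q : ℤ} (hx : x ^ 2 = p * x + q) (hr : r ∈ Algebra.adjoin ℤ {x}) :
    ∃ a b : ℤ, r = a + b * x := by
  induction hr using Algebra.adjoin_induction with
  | mem s hs => exact ⟨0, 1, by simp [Set.mem_singleton_iff.mp hs]⟩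
  | algebraMap n => exact ⟨n, 0, by simp⟩
  | add r s _ _ ihr ihs =>
    obtain ⟨a₁, b₁, rfl⟩ := ihr
    obtain ⟨a₂, b₂, rfl⟩ := ihs
    exact ⟨a₁ + a₂, b₁ + b₂, by push_cast; ring⟩
  | mul r s _ _ ihr ihs =>
    obtain ⟨a₁, b₁, rfl⟩ := ihr
    obtain ⟨a₂, b₂, rfl⟩ := ihs
    exact ⟨a₁ * a₂ + b₁ * b₂ * q, a₁ * b₂ + b₁ * a₂ + b₁ * b₂ * p, by
      push_cast; linear_combination (b₁ * b₂ : A) * hx⟩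

theorem le_intCast_add_mul_of_conj_nonneg {β γ : ℝ} (hβ : 1 < β) (hγ : γ < 1) {a b : ℤ}
    (hconj : 0 ≤ a + b * γ) (hlt : a + b * γ < a + b * β) : β ≤ a + b * β := by
  have hb : (1 : ℝ) ≤ b := by
    have : (0 : ℝ) < b := pos_of_mul_pos_left (by linarith : (0 : ℝ) < b * (β - γ)) (by linarith)
    exact_mod_cast (show (0 : ℤ) < b by exact_mod_cast this)
  have hab : (1 : ℝ) ≤ a + b := by
    have : (0 : ℝ) < a + b := by nlinarith
    exact_mod_cast (show (0 : ℤ) < a + b by exact_mod_cast this)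
  nlinarith

section Conjugate

variable {β : ℝ} (σ : ℚ⟮β⟯ →+* ℝ) {p q : ℤ}
  (hgen : AdjoinSimple.gen ℚ β ^ 2 = p * AdjoinSimple.gen ℚ β + q)
include hgen

theorem exists_eq_intCast_add_mul_gen {z : ℚ⟮β⟯} (hz : (z : ℝ) ∈ Algebra.adjoin ℤ {β}) :
    ∃ a b : ℤ, z = a + b * AdjoinSimple.gen ℚ β := by
  have hβ : β ^ 2 = p * β + q := by simpa using congrArg ((↑) : ℚ⟮β⟯ → ℝ) hgen
  obtain ⟨a, b, hab⟩ := Algebra.exists_eq_intCast_add_mul_of_mem_adjoin hβ hz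
  exact ⟨a, b, Subtype.ext (by simpa using hab)⟩

theorem one_le_abs_mul_abs_conj (hσβ : σ (AdjoinSimple.gen ℚ β) ≠ β) {z : ℚ⟮β⟯}
    (hz : (z : ℝ) ∈ Algebra.adjoin ℤ {β}) (hz0 : z ≠ 0) : 1 ≤ |(z : ℝ)| * |σ z| := by
  obtain ⟨a, b, rfl⟩ := exists_eq_intCast_add_mul_gen hgen hz
  set g := AdjoinSimple.gen ℚ β
  set γ := σ g
  have hg : (g : ℝ) = β := rfl
  have hβ : β ^ 2 = p * β + q := by simpa [hg] using congrArg ((↑) : ℚ⟮β⟯ → ℝ) hgen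
  have hγ : γ ^ 2 = p * γ + q := by simpa using congrArg σ hgen
  have hsum : β + γ = p := by
    have : (β - γ) * (β + γ - p) = 0 := by linear_combination hβ - hγ
    linarith [(mul_eq_zero.mp this).resolve_left (sub_ne_zero.mpr (Ne.symm hσβ))]
  have hnorm :
      ((a + b * g : ℚ⟮β⟯) : ℝ) * σ (a + b * g) = ((a ^ 2 + a * b * p - b ^ 2 * q : ℤ) : ℝ) := by
    simp only [map_add, map_mul, map_intCast]
    push_cast
    rw [hg]
    linear_combination (a * b + b ^ 2 * β : ℝ) * hsum - (b ^ 2 : ℝ) * hβ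
  have hN : a ^ 2 + a * b * p - b ^ 2 * q ≠ 0 := by
    intro h
    rw [h, Int.cast_zero, mul_eq_zero] at hnorm
    rcases hnorm with h | h
    · exact hz0 (Subtype.ext h)
    · exact hz0 (σ.injective (h.trans (map_zero σ).symm))
  rw [← abs_mul, hnorm, ← Int.cast_abs]
  exact_mod_cast Int.one_le_abs hN

theorem le_of_conj_nonneg_of_conj_lt (hβ : 1 < β) (hγ : σ (AdjoinSimple.gen ℚ β) < 1)
    {z : ℚ⟮β⟯} (hz : (z : ℝ) ∈ Algebra.adjoin ℤ {β}) (hconj : 0 ≤ σ z) (hlt : σ z < z) :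
    β ≤ z := by
  obtain ⟨a, b, rfl⟩ := exists_eq_intCast_add_mul_gen hgen hz
  simp only [map_add, map_mul, map_intCast, IntermediateField.coe_add, IntermediateField.coe_mul,
    AdjoinSimple.coe_gen] at hconj hlt ⊢
  push_cast at hlt ⊢
  exact le_intCast_add_mul_of_conj_nonneg hβ hγ hconj hlt

theorem conj_neg_of_eq_add_intCast (hβ : 1 < β) (hσβ : σ (AdjoinSimple.gen ℚ β) ≠ β)
    (hγ : σ (AdjoinSimple.gen ℚ β) < 1) {e w : ℚ⟮β⟯} (he : (e : ℝ) ∈ Algebra.adjoin ℤ {β})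
    (hw : (w : ℝ) ∈ Algebra.adjoin ℤ {β}) (he0 : e ≠ 0) (he1 : |(e : ℝ)| < 1) (hwβ : (w : ℝ) < β)
    {k : ℤ} (hwe : w = e + k) (hσe : σ e < 0) : σ w < 0 := by
  have hσe1 : σ e < -1 := by
    have h := one_le_abs_mul_abs_conj σ hgen hσβ he he0
    have : 1 < |σ e| := by nlinarith [abs_nonneg (e : ℝ), abs_nonneg (σ e)]
    rwa [abs_of_neg hσe, lt_neg] at this
  by_contra! hσw
  have hdiff : σ w - σ e = w - e := by
    rw [hwe]; simp only [map_add, map_intCast, IntermediateField.coe_add]; push_cast; ring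
  have hlt : σ w < w := by linarith [(abs_lt.mp he1).1]
  linarith [le_of_conj_nonneg_of_conj_lt σ hgen hβ hγ hw hσw hlt]

theorem sign_conj_eq_of_eq_add_intCast (hβ : 1 < β) (hσβ : σ (AdjoinSimple.gen ℚ β) ≠ β)
    (hγ : σ (AdjoinSimple.gen ℚ β) < 1) {e w : ℚ⟮β⟯} (he : (e : ℝ) ∈ Algebra.adjoin ℤ {β})
    (hw : (w : ℝ) ∈ Algebra.adjoin ℤ {β}) (he0 : e ≠ 0) (he1 : |(e : ℝ)| < 1) (hwβ : |(w : ℝ)| < β)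
    {k : ℤ} (hwe : w = e + k) : Real.sign (σ w) = Real.sign (σ e) := by
  have hσe0 : σ e ≠ 0 := (map_ne_zero σ).mpr he0
  rcases hσe0.lt_or_gt with hσe | hσe
  · rw [Real.sign_of_neg hσe,
      Real.sign_of_neg (conj_neg_of_eq_add_intCast σ hgen hβ hσβ hγ he hw he0 he1
        (abs_lt.mp hwβ).2 hwe hσe)]
  · have hneg := conj_neg_of_eq_add_intCast σ hgen hβ hσβ hγ (e := -e) (w := -w) (k := -k)
      (by simpa using neg_mem he) (by simpa using neg_mem hw) (neg_ne_zero.mpr he0)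
      (by rwa [IntermediateField.coe_neg, abs_neg])
      (by rw [IntermediateField.coe_neg]; linarith [(abs_lt.mp hwβ).1])
      (by rw [hwe]; push_cast; ring)
      (by rwa [map_neg, neg_lt_zero])
    rw [Real.sign_of_pos hσe, Real.sign_of_pos (by simpa using hneg)]

end Conjugate

/-- Orders of preimages under the β-transformation: for a quadratic Pisot number `β`
with Galois conjugation `σ : ℚ(β) → ℝ` (the embedding with `σ(β) ≠ β`, `|σ(β)| < 1`),
for `x ≠ y ∈ ℤ[β] ∩ [0,1)` and preimages `x₁, y₁ ∈ ℤ[β] ∩ [0,1)` with `T(x₁) = x`,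
`T(y₁) = y`, one has `sign(σ(x₁) − σ(y₁)) = sign(σ(β))·sign(σ(x) − σ(y))`. -/
theorem sign_conjugate_preimage (β : ℝ) (hβ1 : 1 < β) (hβint : IsIntegral ℤ β)
    (hdeg : Module.finrank ℚ ℚ⟮β⟯ = 2)
    (σ : ℚ⟮β⟯ →+* ℝ) (hσβ : σ (AdjoinSimple.gen ℚ β) ≠ β)
    (hσabs : |σ (AdjoinSimple.gen ℚ β)| < 1)
    (x y x₁ y₁ : ℚ⟮β⟯)
    (hx : (x : ℝ) ∈ (Algebra.adjoin ℤ ({β} : Set ℝ) : Set ℝ) ∩ Set.Ico (0 : ℝ) 1)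
    (hy : (y : ℝ) ∈ (Algebra.adjoin ℤ ({β} : Set ℝ) : Set ℝ) ∩ Set.Ico (0 : ℝ) 1)
    (hxy : x ≠ y)
    (hx₁ : (x₁ : ℝ) ∈ (Algebra.adjoin ℤ ({β} : Set ℝ) : Set ℝ) ∩ Set.Ico (0 : ℝ) 1)
    (hy₁ : (y₁ : ℝ) ∈ (Algebra.adjoin ℤ ({β} : Set ℝ) : Set ℝ) ∩ Set.Ico (0 : ℝ) 1)
    (hTx : betaT β (x₁ : ℝ) = (x : ℝ)) (hTy : betaT β (y₁ : ℝ) = (y : ℝ)) :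
    Real.sign (σ x₁ - σ y₁) =
      Real.sign (σ (AdjoinSimple.gen ℚ β)) * Real.sign (σ x - σ y) := by
  set g := AdjoinSimple.gen ℚ β
  have hg : (g : ℝ) = β := rfl
  have hβ0 : 0 < β := zero_lt_one.trans hβ1
  obtain ⟨p, q, hβ⟩ := hβint.exists_sq_eq_intCast_mul_add hdeg
  have hgen : g ^ 2 = p * g + q := Subtype.ext (by simpa [g] using hβ)
  obtain ⟨hxZ, hx0, hx1⟩ := hx
  obtain ⟨hyZ, hy0, hy1⟩ := hy
  obtain ⟨hx₁Z, hx₁0, hx₁1⟩ := hx₁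
  obtain ⟨hy₁Z, hy₁0, hy₁1⟩ := hy₁
  have hfloor {z z₁ : ℚ⟮β⟯} (h : betaT β z₁ = z) : β * z₁ = z + ⌊β * z₁⌋ := by
    rw [← h, betaT, Int.fract_add_floor]
  have hwe : g * (x₁ - y₁) = x - y + ((⌊β * x₁⌋ - ⌊β * y₁⌋ : ℤ) : ℚ⟮β⟯) :=
    Subtype.ext (by push_cast; rw [hg]; linear_combination hfloor hTx - hfloor hTy)
  have he1 : |((x - y : ℚ⟮β⟯) : ℝ)| < 1 := by
    push_cast
    exact abs_sub_lt_iff.mpr ⟨by linarith, by linarith⟩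
  have hw1 : |((g * (x₁ - y₁) : ℚ⟮β⟯) : ℝ)| < β := by
    push_cast
    rw [hg, abs_mul, abs_of_pos hβ0]
    exact mul_lt_of_lt_one_right hβ0 (abs_sub_lt_iff.mpr ⟨by linarith, by linarith⟩)
  have hsign := sign_conj_eq_of_eq_add_intCast σ hgen hβ1 hσβ (abs_lt.mp hσabs).2
    (sub_mem hxZ hyZ) (mul_mem (Algebra.self_mem_adjoin_singleton ℤ β) (sub_mem hx₁Z hy₁Z))
    (sub_ne_zero.mpr hxy) he1 hw1 hwe
  have hγ0 : σ g ≠ 0 := (map_ne_zero σ).mpr fun h => hβ0.ne' (by rw [← hg, h]; rfl)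
  rw [map_mul, Real.sign_mul, map_sub, map_sub] at hsign
  rw [← hsign, ← mul_assoc, ← Real.sign_mul, Real.sign_of_pos (mul_self_pos.mpr hγ0), one_mul]
end
end
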